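/- arXiv:1608.02695 — 4 statements merged into one kernel-verified Lean document; each statement's English description precedes it below -/
import Mathlib

section
/- P̄_cor^opt(C_2) = C_2. Moreover, if C_1 < C_2, then a POVM (M_0,M_1,M_2) attains P̄_cor = P̄_cor^opt(C_2) if and only if M_1 = 0 and ρ_0^{1/2}M_2ρ_0^{1/2} = β|ν_2⟩⟨ν_2| for some β with 0 ≤ β ≤ 1 − Q_1 (and then ρ_0^{1/2}M_0ρ_0^{1/2} = ρ_0 − β|ν_2⟩⟨ν_2|). -/
/-!
Put `Nₖ = ρ₀^{1/2} Mₖ ρ₀^{1/2}` and `Pᵢ = |νᵢ⟩⟨νᵢ|`, so that `P₁ + P₂ = 1`,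
`ρ̄₁ = C₁P₁ + (1 - C₂)P₂` and `ρ̄₂ = (1 - C₁)P₁ + C₂P₂`. Expanding the traces in the basis
`ν₁, ν₂` and using `N₀ + N₁ + N₂ = ρ₀`, `tr ρ₀ = 1` gives
`P̄_cor(C₂) = C₂ - (C₂ - C₁)⟨ν₁|N₁|ν₁⟩ - (2C₂ - 1)⟨ν₂|N₁|ν₂⟩ - (C₁ + C₂ - 1)⟨ν₁|N₂|ν₁⟩`,
a sum of nonnegative defects. Hence the optimum is `C₂` (attained by `M₀ = 1`), and for
`C₁ < C₂` optimality forces `N₁ = 0` and `N₂ν₁ = 0`, i.e. `M₁ = 0` and `N₂ = βP₂`.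
The bound on `β` is Cauchy–Schwarz for the positive form `N₀ = ρ₀ - βP₂` on `ν₁, ν₂`:
`|ρ₁₂|² ≤ ρ₁₁(ρ₂₂ - β)`, i.e. `β ≤ 1 - Q₁` since `ρ₁₁ + ρ₂₂ = 1`.
-/

open Matrix ComplexOrder

noncomputable section

namespace FRIR

/-- A three-outcome POVM on a qubit: `M₀` is the inconclusive outcome. -/
def IsPOVM (M₀ M₁ M₂ : Matrix (Fin 2) (Fin 2) ℂ) : Prop :=
  M₀.PosSemidef ∧ M₁.PosSemidef ∧ M₂.PosSemidef ∧ M₀ + M₁ + M₂ = 1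

/-- `ρ₀ = q₁ρ₁ + q₂ρ₂`. -/
def rho0 (q₁ q₂ : ℝ) (ρ₁ ρ₂ : Matrix (Fin 2) (Fin 2) ℂ) : Matrix (Fin 2) (Fin 2) ℂ :=
  (q₁ : ℂ) • ρ₁ + (q₂ : ℂ) • ρ₂

/-- The probability of the inconclusive result, `P_I = tr(ρ₀M₀)`. -/
def PIof (q₁ q₂ : ℝ) (ρ₁ ρ₂ M₀ : Matrix (Fin 2) (Fin 2) ℂ) : ℝ :=
  (Matrix.trace (rho0 q₁ q₂ ρ₁ ρ₂ * M₀)).re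

/-- `P_cor = q₁tr(ρ₁M₁) + q₂tr(ρ₂M₂)`. -/
def Pcor (q₁ q₂ : ℝ) (ρ₁ ρ₂ M₁ M₂ : Matrix (Fin 2) (Fin 2) ℂ) : ℝ :=
  q₁ * (Matrix.trace (ρ₁ * M₁)).re + q₂ * (Matrix.trace (ρ₂ * M₂)).re

/-- `P̄_cor = q·tr(ρ₀M₀) + q₁tr(ρ₁M₁) + q₂tr(ρ₂M₂)`. -/
def PbarCor (q q₁ q₂ : ℝ) (ρ₁ ρ₂ M₀ M₁ M₂ : Matrix (Fin 2) (Fin 2) ℂ) : ℝ :=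
  q * PIof q₁ q₂ ρ₁ ρ₂ M₀ + Pcor q₁ q₂ ρ₁ ρ₂ M₁ M₂

/-- `P̄_cor^opt(q)`: the maximal value of `P̄_cor` over all POVMs. -/
def PbarOpt (q q₁ q₂ : ℝ) (ρ₁ ρ₂ : Matrix (Fin 2) (Fin 2) ℂ) : ℝ :=
  sSup {x : ℝ | ∃ M₀ M₁ M₂, IsPOVM M₀ M₁ M₂ ∧ PbarCor q q₁ q₂ ρ₁ ρ₂ M₀ M₁ M₂ = x}

/-- `P_cor^opt(Q)`: the maximal value of `P_cor` over POVMs with `P_I = Q`. -/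
def PcorOpt (Q q₁ q₂ : ℝ) (ρ₁ ρ₂ : Matrix (Fin 2) (Fin 2) ℂ) : ℝ :=
  sSup {x : ℝ | ∃ M₀ M₁ M₂, IsPOVM M₀ M₁ M₂ ∧
    PIof q₁ q₂ ρ₁ ρ₂ M₀ = Q ∧ Pcor q₁ q₂ ρ₁ ρ₂ M₁ M₂ = x}

/-- `P_I(q) = { tr(ρ₀M₀) : POVMs attaining P̄_cor^opt(q) }`. -/
def PIset (q q₁ q₂ : ℝ) (ρ₁ ρ₂ : Matrix (Fin 2) (Fin 2) ℂ) : Set ℝ :=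
  {Q : ℝ | ∃ M₀ M₁ M₂, IsPOVM M₀ M₁ M₂ ∧
    PbarCor q q₁ q₂ ρ₁ ρ₂ M₀ M₁ M₂ = PbarOpt q q₁ q₂ ρ₁ ρ₂ ∧ PIof q₁ q₂ ρ₁ ρ₂ M₀ = Q}

/-- `q₀⁽⁰⁾ = sup{q > 0 : 0 ∈ P_I(q)}`. -/
def q0low (q₁ q₂ : ℝ) (ρ₁ ρ₂ : Matrix (Fin 2) (Fin 2) ℂ) : ℝ :=
  sSup {q : ℝ | 0 < q ∧ (0 : ℝ) ∈ PIset q q₁ q₂ ρ₁ ρ₂}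

/-- `q₀⁽¹⁾ = inf{q > 0 : 1 ∈ P_I(q)}`. -/
def q0high (q₁ q₂ : ℝ) (ρ₁ ρ₂ : Matrix (Fin 2) (Fin 2) ℂ) : ℝ :=
  sInf {q : ℝ | 0 < q ∧ (1 : ℝ) ∈ PIset q q₁ q₂ ρ₁ ρ₂}

end FRIR

namespace Matrix

variable {n : Type*} [Fintype n]

lemma trace_vecMulVec_star_mul (v : n → ℂ) (N : Matrix n n ℂ) :
    (vecMulVec v (star v) * N).trace = star v ⬝ᵥ (N *ᵥ v) := by
  rw [trace_mul_comm, mul_vecMulVec, trace_vecMulVec, dotProduct_comm]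

lemma trace_conj_mul (S R M : Matrix n n ℂ) :
    (S * R * S * M).trace = (R * (S * M * S)).trace := by
  rw [Matrix.mul_assoc, Matrix.mul_assoc, trace_mul_comm, Matrix.mul_assoc, Matrix.mul_assoc]

lemma re_trace_mul_of_conj_eq {S R ρ : Matrix n n ℂ} {c : ℝ} (h : S * R * S = (c : ℂ) • ρ)
    (M : Matrix n n ℂ) : c * (ρ * M).trace.re = (R * (S * M * S)).trace.re := by
  rw [← trace_conj_mul, h, Matrix.smul_mul, trace_smul, smul_eq_mul, Complex.re_ofReal_mul]

lemma re_trace_smul_vecMulVec_add_mul (a b : ℝ) (ν₁ ν₂ : n → ℂ) (N : Matrix n n ℂ) :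
    (((a : ℂ) • vecMulVec ν₁ (star ν₁) + (b : ℂ) • vecMulVec ν₂ (star ν₂)) * N).trace.re =
      a * (star ν₁ ⬝ᵥ (N *ᵥ ν₁)).re + b * (star ν₂ ⬝ᵥ (N *ᵥ ν₂)).re := by
  simp only [Matrix.add_mul, Matrix.smul_mul, trace_add, trace_smul, trace_vecMulVec_star_mul,
    smul_eq_mul, Complex.add_re, Complex.re_ofReal_mul]

lemma dotProduct_vecMulVec_mulVec (u v w : n → ℂ) :
    star u ⬝ᵥ (vecMulVec v (star v) *ᵥ w) = (star u ⬝ᵥ v) * (star v ⬝ᵥ w) := by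
  rw [vecMulVec_mulVec, op_smul_eq_smul, dotProduct_smul, smul_eq_mul, mul_comm]

namespace PosSemidef

variable {N : Matrix n n ℂ}

lemma dotProduct_mulVec_eq_re (hN : N.PosSemidef) (v : n → ℂ) :
    star v ⬝ᵥ (N *ᵥ v) = ((star v ⬝ᵥ (N *ᵥ v)).re : ℂ) :=
  Complex.eq_re_of_ofReal_le (r := 0) (by simpa using hN.dotProduct_mulVec_nonneg v)

lemma re_dotProduct_mulVec_nonneg (hN : N.PosSemidef) (v : n → ℂ) :
    0 ≤ (star v ⬝ᵥ (N *ᵥ v)).re :=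
  hN.re_dotProduct_nonneg v

lemma mulVec_eq_zero_of_re_dotProduct_eq_zero (hN : N.PosSemidef) {v : n → ℂ}
    (h : (star v ⬝ᵥ (N *ᵥ v)).re = 0) : N *ᵥ v = 0 := by
  rw [← hN.dotProduct_mulVec_zero_iff, hN.dotProduct_mulVec_eq_re, h, Complex.ofReal_zero]

lemma norm_sq_dotProduct_mulVec_le (hN : N.PosSemidef) (u v : n → ℂ) :
    ‖star u ⬝ᵥ (N *ᵥ v)‖ ^ 2 ≤ (star u ⬝ᵥ (N *ᵥ u)).re * (star v ⬝ᵥ (N *ᵥ v)).re := by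
  let := N.toSeminormedAddCommGroup hN
  let := N.toInnerProductSpace hN
  have := inner_mul_inner_self_le (𝕜 := ℂ) u v
  rw [norm_inner_symm v u, ← sq] at this
  change ‖(N *ᵥ v) ⬝ᵥ star u‖ ^ 2 ≤ ((N *ᵥ u) ⬝ᵥ star u).re * ((N *ᵥ v) ⬝ᵥ star v).re at this
  simpa only [dotProduct_comm _ (star _)] using this

lemma mul_mul_same (hN : N.PosSemidef) {S : Matrix n n ℂ} (hS : S.IsHermitian) :
    (S * N * S).PosSemidef := by
  simpa only [hS.eq] using hN.mul_mul_conjTranspose_same S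

end PosSemidef

lemma le_of_posSemidef_sub_smul_vecMulVec {A : Matrix n n ℂ} {u v : n → ℂ} {β : ℝ}
    (h : (A - (β : ℂ) • vecMulVec v (star v)).PosSemidef) (hv : star v ⬝ᵥ v = 1)
    (huv : star u ⬝ᵥ v = 0) (hu : 0 < (star u ⬝ᵥ (A *ᵥ u)).re) :
    β ≤ (star v ⬝ᵥ (A *ᵥ v)).re - ‖star u ⬝ᵥ (A *ᵥ v)‖ ^ 2 / (star u ⬝ᵥ (A *ᵥ u)).re := by
  have := h.norm_sq_dotProduct_mulVec_le u v
  simp only [sub_mulVec, smul_mulVec, dotProduct_sub, dotProduct_smul,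
    dotProduct_vecMulVec_mulVec, huv, hv, smul_eq_mul, zero_mul, mul_zero, sub_zero, mul_one,
    Complex.sub_re, Complex.ofReal_re] at this
  rw [le_sub_iff_add_le, ← le_sub_iff_add_le', div_le_iff₀ hu]
  linarith

lemma vecMulVec_add_vecMulVec_eq_one {ν₁ ν₂ : Fin 2 → ℂ}
    (hν₁ : star ν₁ ⬝ᵥ ν₁ = 1) (hν₂ : star ν₂ ⬝ᵥ ν₂ = 1) (hν₁₂ : star ν₁ ⬝ᵥ ν₂ = 0) :
    vecMulVec ν₁ (star ν₁) + vecMulVec ν₂ (star ν₂) = 1 := by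
  have hν₂₁ : star ν₂ ⬝ᵥ ν₁ = 0 := by
    have := congrArg star hν₁₂
    rwa [star_dotProduct, star_star, star_zero] at this
  -- `U` has columns `ν₁, ν₂`: it is unitary, and `U * Uᴴ = P₁ + P₂`.
  let U : Matrix (Fin 2) (Fin 2) ℂ := (of ![ν₁, ν₂])ᵀ
  have hU : Uᴴ * U = 1 := by
    ext i j
    fin_cases i <;> fin_cases j <;>
      simp [U, mul_apply, Fin.sum_univ_two, dotProduct] at hν₁ hν₂ hν₁₂ hν₂₁ ⊢ <;> assumption
  rw [← mul_eq_one_comm.mp hU]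
  ext i j
  simp [U, mul_apply, Fin.sum_univ_two, vecMulVec_apply]

section Frame

variable [DecidableEq n] {ν₁ ν₂ : n → ℂ}

lemma eq_dotProduct_smul_add_dotProduct_smul
    (hν : vecMulVec ν₁ (star ν₁) + vecMulVec ν₂ (star ν₂) = 1) (w : n → ℂ) :
    w = (star ν₁ ⬝ᵥ w) • ν₁ + (star ν₂ ⬝ᵥ w) • ν₂ := by
  conv_lhs => rw [← one_mulVec w, ← hν]
  simp only [add_mulVec, vecMulVec_mulVec, op_smul_eq_smul]

lemma eq_vecMulVec_mulVec_add
    (hν : vecMulVec ν₁ (star ν₁) + vecMulVec ν₂ (star ν₂) = 1) (N : Matrix n n ℂ) :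
    N = vecMulVec (N *ᵥ ν₁) (star ν₁) + vecMulVec (N *ᵥ ν₂) (star ν₂) := by
  conv_lhs => rw [← Matrix.mul_one N, ← hν]
  rw [Matrix.mul_add, mul_vecMulVec, mul_vecMulVec]

lemma trace_eq_dotProduct_add
    (hν : vecMulVec ν₁ (star ν₁) + vecMulVec ν₂ (star ν₂) = 1) (N : Matrix n n ℂ) :
    N.trace = star ν₁ ⬝ᵥ (N *ᵥ ν₁) + star ν₂ ⬝ᵥ (N *ᵥ ν₂) := by
  conv_lhs => rw [← Matrix.one_mul N, ← hν]
  rw [Matrix.add_mul, trace_add, trace_vecMulVec_star_mul, trace_vecMulVec_star_mul]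

lemma PosSemidef.eq_zero_of_re_dotProduct_eq_zero
    (hν : vecMulVec ν₁ (star ν₁) + vecMulVec ν₂ (star ν₂) = 1) {N : Matrix n n ℂ}
    (hN : N.PosSemidef) (h₁ : (star ν₁ ⬝ᵥ (N *ᵥ ν₁)).re = 0)
    (h₂ : (star ν₂ ⬝ᵥ (N *ᵥ ν₂)).re = 0) : N = 0 := by
  rw [eq_vecMulVec_mulVec_add hν N, hN.mulVec_eq_zero_of_re_dotProduct_eq_zero h₁,
    hN.mulVec_eq_zero_of_re_dotProduct_eq_zero h₂, zero_vecMulVec, zero_vecMulVec, add_zero]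

lemma PosSemidef.eq_smul_vecMulVec_of_re_dotProduct_eq_zero
    (hν : vecMulVec ν₁ (star ν₁) + vecMulVec ν₂ (star ν₂) = 1) {N : Matrix n n ℂ}
    (hN : N.PosSemidef) (h : (star ν₁ ⬝ᵥ (N *ᵥ ν₁)).re = 0) :
    N = ((star ν₂ ⬝ᵥ (N *ᵥ ν₂)).re : ℂ) • vecMulVec ν₂ (star ν₂) := by
  have hN₁ := hN.mulVec_eq_zero_of_re_dotProduct_eq_zero h
  have h₁₂ : star ν₁ ⬝ᵥ (N *ᵥ ν₂) = 0 := by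
    rw [dotProduct_mulVec, ← hN.isHermitian.eq, ← star_mulVec, hN₁, star_zero, zero_dotProduct]
  have hNν₂ := eq_dotProduct_smul_add_dotProduct_smul hν (N *ᵥ ν₂)
  rw [h₁₂, zero_smul, zero_add, hN.dotProduct_mulVec_eq_re] at hNν₂
  conv_lhs => rw [eq_vecMulVec_mulVec_add hν N, hN₁, hNν₂]
  rw [zero_vecMulVec, zero_add, smul_vecMulVec]

lemma PosDef.le_one_sub_of_posSemidef_sub_smul_vecMulVec
    (hν : vecMulVec ν₁ (star ν₁) + vecMulVec ν₂ (star ν₂) = 1) (hν₁ : star ν₁ ⬝ᵥ ν₁ = 1)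
    (hν₂ : star ν₂ ⬝ᵥ ν₂ = 1) (hν₁₂ : star ν₁ ⬝ᵥ ν₂ = 0) {A : Matrix n n ℂ} (hA : A.PosDef)
    (htr : A.trace = 1) {β : ℝ} (h : (A - (β : ℂ) • vecMulVec ν₂ (star ν₂)).PosSemidef) :
    β ≤ 1 - ((star ν₁ ⬝ᵥ (A *ᵥ ν₁)).re
      + ‖star ν₁ ⬝ᵥ (A *ᵥ ν₂)‖ ^ 2 / (star ν₁ ⬝ᵥ (A *ᵥ ν₁)).re) := by
  have hpos : 0 < (star ν₁ ⬝ᵥ (A *ᵥ ν₁)).re :=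
    hA.re_dotProduct_pos fun h₀ => by simp [h₀] at hν₁
  have hnorm : (star ν₁ ⬝ᵥ (A *ᵥ ν₁)).re + (star ν₂ ⬝ᵥ (A *ᵥ ν₂)).re = 1 := by
    rw [← Complex.add_re, ← trace_eq_dotProduct_add hν, htr, Complex.one_re]
  have := le_of_posSemidef_sub_smul_vecMulVec h hν₂ hν₁₂ hpos
  linarith

end Frame

end Matrix

namespace FRIR

variable {q₁ q₂ : ℝ} {ρ₁ ρ₂ S : Matrix (Fin 2) (Fin 2) ℂ} {ν₁ ν₂ : Fin 2 → ℂ} {C₁ C₂ : ℝ}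

lemma trace_rho0 (htr₁ : ρ₁.trace = 1) (htr₂ : ρ₂.trace = 1) (hq : q₁ + q₂ = 1) :
    (rho0 q₁ q₂ ρ₁ ρ₂).trace = 1 := by
  rw [rho0, trace_add, trace_smul, trace_smul, htr₁, htr₂, smul_eq_mul, smul_eq_mul, mul_one,
    mul_one]
  exact_mod_cast hq

lemma pbarCor_eq (hν : vecMulVec ν₁ (star ν₁) + vecMulVec ν₂ (star ν₂) = 1)
    (hSS : S * S = rho0 q₁ q₂ ρ₁ ρ₂)
    (hbar₁ : S * ((C₁ : ℂ) • vecMulVec ν₁ (star ν₁)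
        + ((1 - C₂ : ℝ) : ℂ) • vecMulVec ν₂ (star ν₂)) * S = (q₁ : ℂ) • ρ₁)
    (hbar₂ : S * (((1 - C₁ : ℝ) : ℂ) • vecMulVec ν₁ (star ν₁)
        + (C₂ : ℂ) • vecMulVec ν₂ (star ν₂)) * S = (q₂ : ℂ) • ρ₂)
    (q : ℝ) (M₀ M₁ M₂ : Matrix (Fin 2) (Fin 2) ℂ) :
    PbarCor q q₁ q₂ ρ₁ ρ₂ M₀ M₁ M₂ =
      q * ((star ν₁ ⬝ᵥ ((S * M₀ * S) *ᵥ ν₁)).re + (star ν₂ ⬝ᵥ ((S * M₀ * S) *ᵥ ν₂)).re)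
      + (C₁ * (star ν₁ ⬝ᵥ ((S * M₁ * S) *ᵥ ν₁)).re
        + (1 - C₂) * (star ν₂ ⬝ᵥ ((S * M₁ * S) *ᵥ ν₂)).re)
      + ((1 - C₁) * (star ν₁ ⬝ᵥ ((S * M₂ * S) *ᵥ ν₁)).re
        + C₂ * (star ν₂ ⬝ᵥ ((S * M₂ * S) *ᵥ ν₂)).re) := by
  have h₀ : S * 1 * S = ((1 : ℝ) : ℂ) • rho0 q₁ q₂ ρ₁ ρ₂ := by
    rw [Matrix.mul_one, hSS, Complex.ofReal_one, one_smul]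
  rw [PbarCor, PIof, Pcor, ← one_mul (trace (rho0 q₁ q₂ ρ₁ ρ₂ * M₀)).re, re_trace_mul_of_conj_eq h₀,
    re_trace_mul_of_conj_eq hbar₁, re_trace_mul_of_conj_eq hbar₂, Matrix.one_mul,
    trace_eq_dotProduct_add hν, Complex.add_re, re_trace_smul_vecMulVec_add_mul,
    re_trace_smul_vecMulVec_add_mul, ← add_assoc]

lemma pbarCor_C₂_eq (hν : vecMulVec ν₁ (star ν₁) + vecMulVec ν₂ (star ν₂) = 1)
    (hSS : S * S = rho0 q₁ q₂ ρ₁ ρ₂)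
    (hbar₁ : S * ((C₁ : ℂ) • vecMulVec ν₁ (star ν₁)
        + ((1 - C₂ : ℝ) : ℂ) • vecMulVec ν₂ (star ν₂)) * S = (q₁ : ℂ) • ρ₁)
    (hbar₂ : S * (((1 - C₁ : ℝ) : ℂ) • vecMulVec ν₁ (star ν₁)
        + (C₂ : ℂ) • vecMulVec ν₂ (star ν₂)) * S = (q₂ : ℂ) • ρ₂)
    (htr : (rho0 q₁ q₂ ρ₁ ρ₂).trace = 1)
    {M₀ M₁ M₂ : Matrix (Fin 2) (Fin 2) ℂ} (hsum : M₀ + M₁ + M₂ = 1) :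
    PbarCor C₂ q₁ q₂ ρ₁ ρ₂ M₀ M₁ M₂ =
      C₂ - ((C₂ - C₁) * (star ν₁ ⬝ᵥ ((S * M₁ * S) *ᵥ ν₁)).re
        + (2 * C₂ - 1) * (star ν₂ ⬝ᵥ ((S * M₁ * S) *ᵥ ν₂)).re
        + (C₁ + C₂ - 1) * (star ν₁ ⬝ᵥ ((S * M₂ * S) *ᵥ ν₁)).re) := by
  have hconj : S * M₀ * S + S * M₁ * S + S * M₂ * S = rho0 q₁ q₂ ρ₁ ρ₂ := by
    rw [← hSS, ← Matrix.add_mul, ← Matrix.add_mul, ← Matrix.mul_add, ← Matrix.mul_add, hsum,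
      Matrix.mul_one]
  have hdiag (v : Fin 2 → ℂ) : (star v ⬝ᵥ ((S * M₀ * S) *ᵥ v)).re
      + (star v ⬝ᵥ ((S * M₁ * S) *ᵥ v)).re + (star v ⬝ᵥ ((S * M₂ * S) *ᵥ v)).re
      = (star v ⬝ᵥ (rho0 q₁ q₂ ρ₁ ρ₂ *ᵥ v)).re := by
    rw [← hconj, add_mulVec, add_mulVec, dotProduct_add, dotProduct_add, Complex.add_re,
      Complex.add_re]
  have hnorm : (star ν₁ ⬝ᵥ (rho0 q₁ q₂ ρ₁ ρ₂ *ᵥ ν₁)).re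
      + (star ν₂ ⬝ᵥ (rho0 q₁ q₂ ρ₁ ρ₂ *ᵥ ν₂)).re = 1 := by
    rw [← Complex.add_re, ← trace_eq_dotProduct_add hν, htr, Complex.one_re]
  rw [pbarCor_eq hν hSS hbar₁ hbar₂]
  linear_combination C₂ * hdiag ν₁ + C₂ * hdiag ν₂ + C₂ * hnorm

lemma pbarOpt_C₂_eq (hS : S.IsHermitian)
    (hν : vecMulVec ν₁ (star ν₁) + vecMulVec ν₂ (star ν₂) = 1)
    (hSS : S * S = rho0 q₁ q₂ ρ₁ ρ₂)
    (hbar₁ : S * ((C₁ : ℂ) • vecMulVec ν₁ (star ν₁)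
        + ((1 - C₂ : ℝ) : ℂ) • vecMulVec ν₂ (star ν₂)) * S = (q₁ : ℂ) • ρ₁)
    (hbar₂ : S * (((1 - C₁ : ℝ) : ℂ) • vecMulVec ν₁ (star ν₁)
        + (C₂ : ℂ) • vecMulVec ν₂ (star ν₂)) * S = (q₂ : ℂ) • ρ₂)
    (htr : (rho0 q₁ q₂ ρ₁ ρ₂).trace = 1) (hC12 : C₁ ≤ C₂) (hCsum : 1 < C₁ + C₂) :
    PbarOpt C₂ q₁ q₂ ρ₁ ρ₂ = C₂ := by
  refine IsGreatest.csSup_eq ⟨⟨1, 0, 0, ⟨.one, .zero, .zero, by simp⟩, ?_⟩, ?_⟩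
  · simp [pbarCor_C₂_eq hν hSS hbar₁ hbar₂ htr (M₀ := 1) (M₁ := 0) (M₂ := 0) (by simp)]
  · rintro _ ⟨M₀, M₁, M₂, ⟨-, hM₁, hM₂, hsum⟩, rfl⟩
    rw [pbarCor_C₂_eq hν hSS hbar₁ hbar₂ htr hsum]
    have hN₁ := hM₁.mul_mul_same hS
    have hN₂ := hM₂.mul_mul_same hS
    nlinarith [hN₁.re_dotProduct_mulVec_nonneg ν₁, hN₁.re_dotProduct_mulVec_nonneg ν₂,
      hN₂.re_dotProduct_mulVec_nonneg ν₁]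

lemma eq_zero_and_eq_smul_of_pbarCor_eq (hS : S.IsHermitian)
    (hν : vecMulVec ν₁ (star ν₁) + vecMulVec ν₂ (star ν₂) = 1)
    (hρ0 : (rho0 q₁ q₂ ρ₁ ρ₂).PosDef) (hSS : S * S = rho0 q₁ q₂ ρ₁ ρ₂)
    (hbar₁ : S * ((C₁ : ℂ) • vecMulVec ν₁ (star ν₁)
        + ((1 - C₂ : ℝ) : ℂ) • vecMulVec ν₂ (star ν₂)) * S = (q₁ : ℂ) • ρ₁)
    (hbar₂ : S * (((1 - C₁ : ℝ) : ℂ) • vecMulVec ν₁ (star ν₁)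
        + (C₂ : ℂ) • vecMulVec ν₂ (star ν₂)) * S = (q₂ : ℂ) • ρ₂)
    (htr : (rho0 q₁ q₂ ρ₁ ρ₂).trace = 1) (hC : C₁ < C₂) (hCsum : 1 < C₁ + C₂)
    {M₀ M₁ M₂ : Matrix (Fin 2) (Fin 2) ℂ} (hM : IsPOVM M₀ M₁ M₂)
    (h : PbarCor C₂ q₁ q₂ ρ₁ ρ₂ M₀ M₁ M₂ = C₂) :
    M₁ = 0 ∧ S * M₂ * S =
      ((star ν₂ ⬝ᵥ ((S * M₂ * S) *ᵥ ν₂)).re : ℂ) • vecMulVec ν₂ (star ν₂) := by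
  obtain ⟨-, hM₁, hM₂, hsum⟩ := hM
  have hN₁ := hM₁.mul_mul_same hS
  have hN₂ := hM₂.mul_mul_same hS
  rw [pbarCor_C₂_eq hν hSS hbar₁ hbar₂ htr hsum] at h
  obtain ⟨h₁₁, h₂₁, h₁₂⟩ : (star ν₁ ⬝ᵥ ((S * M₁ * S) *ᵥ ν₁)).re = 0 ∧
      (star ν₂ ⬝ᵥ ((S * M₁ * S) *ᵥ ν₂)).re = 0 ∧ (star ν₁ ⬝ᵥ ((S * M₂ * S) *ᵥ ν₁)).re = 0 := by
    refine ⟨?_, ?_, ?_⟩ <;> nlinarith [hN₁.re_dotProduct_mulVec_nonneg ν₁,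
      hN₁.re_dotProduct_mulVec_nonneg ν₂, hN₂.re_dotProduct_mulVec_nonneg ν₁]
  refine ⟨?_, hN₂.eq_smul_vecMulVec_of_re_dotProduct_eq_zero hν h₁₂⟩
  have hSu : IsUnit S := by
    rw [isUnit_iff_isUnit_det]
    apply isUnit_of_mul_isUnit_left (y := S.det)
    rw [← det_mul, hSS, ← isUnit_iff_isUnit_det]
    exact hρ0.isUnit
  have := hN₁.eq_zero_of_re_dotProduct_eq_zero hν h₁₁ h₂₁
  rwa [Matrix.mul_assoc, hSu.mul_right_eq_zero, hSu.mul_left_eq_zero] at this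

theorem stmt5_general
    (q₁ q₂ : ℝ) (ρ₁ ρ₂ : Matrix (Fin 2) (Fin 2) ℂ)
    (hq : q₁ + q₂ = 1)
    (htr₁ : ρ₁.trace = 1)
    (htr₂ : ρ₂.trace = 1)
    (hρ0 : (rho0 q₁ q₂ ρ₁ ρ₂).PosDef)
    (S : Matrix (Fin 2) (Fin 2) ℂ) (hS : S.PosSemidef) (hSS : S * S = rho0 q₁ q₂ ρ₁ ρ₂)
    (ν₁ ν₂ : Fin 2 → ℂ)
    (hν₁ : star ν₁ ⬝ᵥ ν₁ = 1) (hν₂ : star ν₂ ⬝ᵥ ν₂ = 1) (hν₁₂ : star ν₁ ⬝ᵥ ν₂ = 0)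
    (C₁ C₂ : ℝ) (hC12 : C₁ ≤ C₂) (hCsum : 1 < C₁ + C₂)
    (hbar₁ : S * ((C₁ : ℂ) • vecMulVec ν₁ (star ν₁)
        + ((1 - C₂ : ℝ) : ℂ) • vecMulVec ν₂ (star ν₂)) * S = (q₁ : ℂ) • ρ₁)
    (hbar₂ : S * (((1 - C₁ : ℝ) : ℂ) • vecMulVec ν₁ (star ν₁)
        + (C₂ : ℂ) • vecMulVec ν₂ (star ν₂)) * S = (q₂ : ℂ) • ρ₂)
    (ρ11 : ℝ) (ρ12 : ℂ)
    (h11 : (ρ11 : ℂ) = star ν₁ ⬝ᵥ (rho0 q₁ q₂ ρ₁ ρ₂ *ᵥ ν₁))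
    (h12 : ρ12 = star ν₁ ⬝ᵥ (rho0 q₁ q₂ ρ₁ ρ₂ *ᵥ ν₂))
    :
    PbarOpt C₂ q₁ q₂ ρ₁ ρ₂ = C₂ ∧
      (C₁ < C₂ → ∀ M₀ M₁ M₂ : Matrix (Fin 2) (Fin 2) ℂ, IsPOVM M₀ M₁ M₂ →
        (PbarCor C₂ q₁ q₂ ρ₁ ρ₂ M₀ M₁ M₂ = PbarOpt C₂ q₁ q₂ ρ₁ ρ₂ ↔
          (M₁ = 0 ∧ ∃ β : ℝ, 0 ≤ β ∧ β ≤ 1 - (ρ11 + ‖ρ12‖ ^ 2 / ρ11) ∧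
            S * M₂ * S = (β : ℂ) • vecMulVec ν₂ (star ν₂) ∧
            S * M₀ * S = rho0 q₁ q₂ ρ₁ ρ₂ - (β : ℂ) • vecMulVec ν₂ (star ν₂)))) := by
  have hν := vecMulVec_add_vecMulVec_eq_one hν₁ hν₂ hν₁₂
  have htr := trace_rho0 htr₁ htr₂ hq
  have hopt := pbarOpt_C₂_eq hS.isHermitian hν hSS hbar₁ hbar₂ htr hC12 hCsum
  refine ⟨hopt, fun hC M₀ M₁ M₂ hM => ?_⟩
  rw [hopt]
  constructor
  · intro h
    obtain ⟨rfl, hM₂⟩ :=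
      eq_zero_and_eq_smul_of_pbarCor_eq hS.isHermitian hν hρ0 hSS hbar₁ hbar₂ htr hC hCsum hM h
    set β := (star ν₂ ⬝ᵥ ((S * M₂ * S) *ᵥ ν₂)).re
    have hM₀ : S * M₀ * S = rho0 q₁ q₂ ρ₁ ρ₂ - (β : ℂ) • vecMulVec ν₂ (star ν₂) := by
      rw [eq_sub_of_add_eq (by simpa using hM.2.2.2 : M₀ + M₂ = 1), Matrix.mul_sub,
        Matrix.sub_mul, Matrix.mul_one, hSS, hM₂]
    have hβ := hρ0.le_one_sub_of_posSemidef_sub_smul_vecMulVec hν hν₁ hν₂ hν₁₂ htr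
      (hM₀ ▸ hM.1.mul_mul_same hS.isHermitian)
    rw [← h11, ← h12, Complex.ofReal_re] at hβ
    exact ⟨rfl, β, (hM.2.2.1.mul_mul_same hS.isHermitian).re_dotProduct_mulVec_nonneg ν₂, hβ,
      hM₂, hM₀⟩
  · rintro ⟨rfl, β, -, -, hM₂, -⟩
    rw [pbarCor_C₂_eq hν hSS hbar₁ hbar₂ htr hM.2.2.2, hM₂, smul_mulVec, dotProduct_smul,
      dotProduct_vecMulVec_mulVec, hν₁₂]
    simp

/-- `P̄_cor^opt(C₂) = C₂`; moreover if `C₁ < C₂` then a POVM is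
optimal for inconclusive degree `C₂` iff `M₁ = 0` and `ρ₀^½M₂ρ₀^½ = β|ν₂⟩⟨ν₂|`
for some `0 ≤ β ≤ 1 − Q₁` (and then `ρ₀^½M₀ρ₀^½ = ρ₀ − β|ν₂⟩⟨ν₂|`). -/
theorem stmt5
    (q₁ q₂ : ℝ) (ρ₁ ρ₂ : Matrix (Fin 2) (Fin 2) ℂ)
    (hq₁ : 0 < q₁) (hq₂ : 0 < q₂) (hq : q₁ + q₂ = 1)
    (hρ₁ : ρ₁.PosSemidef) (htr₁ : ρ₁.trace = 1)
    (hρ₂ : ρ₂.PosSemidef) (htr₂ : ρ₂.trace = 1)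
    (hρ0 : (rho0 q₁ q₂ ρ₁ ρ₂).PosDef)
    (S : Matrix (Fin 2) (Fin 2) ℂ) (hS : S.PosSemidef) (hSS : S * S = rho0 q₁ q₂ ρ₁ ρ₂)
    (ν₁ ν₂ : Fin 2 → ℂ)
    (hν₁ : star ν₁ ⬝ᵥ ν₁ = 1) (hν₂ : star ν₂ ⬝ᵥ ν₂ = 1) (hν₁₂ : star ν₁ ⬝ᵥ ν₂ = 0)
    (C₁ C₂ : ℝ) (hC12 : C₁ ≤ C₂) (hCsum : 1 < C₁ + C₂)
    (hbar₁ : S * ((C₁ : ℂ) • vecMulVec ν₁ (star ν₁)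
        + ((1 - C₂ : ℝ) : ℂ) • vecMulVec ν₂ (star ν₂)) * S = (q₁ : ℂ) • ρ₁)
    (hbar₂ : S * (((1 - C₁ : ℝ) : ℂ) • vecMulVec ν₁ (star ν₁)
        + (C₂ : ℂ) • vecMulVec ν₂ (star ν₂)) * S = (q₂ : ℂ) • ρ₂)
    (ρ11 ρ22 : ℝ) (ρ12 : ℂ)
    (h11 : (ρ11 : ℂ) = star ν₁ ⬝ᵥ (rho0 q₁ q₂ ρ₁ ρ₂ *ᵥ ν₁))
    (h22 : (ρ22 : ℂ) = star ν₂ ⬝ᵥ (rho0 q₁ q₂ ρ₁ ρ₂ *ᵥ ν₂))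
    (h12 : ρ12 = star ν₁ ⬝ᵥ (rho0 q₁ q₂ ρ₁ ρ₂ *ᵥ ν₂))
    :
    PbarOpt C₂ q₁ q₂ ρ₁ ρ₂ = C₂ ∧
      (C₁ < C₂ → ∀ M₀ M₁ M₂ : Matrix (Fin 2) (Fin 2) ℂ, IsPOVM M₀ M₁ M₂ →
        (PbarCor C₂ q₁ q₂ ρ₁ ρ₂ M₀ M₁ M₂ = PbarOpt C₂ q₁ q₂ ρ₁ ρ₂ ↔
          (M₁ = 0 ∧ ∃ β : ℝ, 0 ≤ β ∧ β ≤ 1 - (ρ11 + ‖ρ12‖ ^ 2 / ρ11) ∧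
            S * M₂ * S = (β : ℂ) • vecMulVec ν₂ (star ν₂) ∧
            S * M₀ * S = rho0 q₁ q₂ ρ₁ ρ₂ - (β : ℂ) • vecMulVec ν₂ (star ν₂)))) :=
  stmt5_general q₁ q₂ ρ₁ ρ₂ hq htr₁ htr₂ hρ0 S hS hSS ν₁ ν₂ hν₁ hν₂ hν₁₂ C₁ C₂ hC12 hCsum hbar₁
    hbar₂ ρ11 ρ12 h11 h12

end FRIR
end
end

section
/- If C_1 ≤ 1/2 < C_2, then P̄_cor^opt(1−C_1) = q_2 and P_I(1−C_1) = [0, 1−Q_2]; consequently q_0^{(0)} = 1−C_1. -/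
/-!
Put `wᵢ = ρ₀^{1/2} νᵢ`. In the frame `w₁, w₂` the operators `ρ₀`, `q₁ρ₁`, `q₂ρ₂` are
simultaneously diagonal, so `P̄_cor` is a linear combination of `aⱼ = ⟨w₁, Mⱼ w₁⟩` and
`bⱼ = ⟨w₂, Mⱼ w₂⟩`, whose sums over the POVM are `ρ₁₁` and `ρ₂₂`. At `q = 1 - C₁` this yields
`q₂ - P̄_cor = (C₁ + C₂ - 1) b₀ + (1 - 2C₁) a₁ + (2C₂ - 1) b₁ ≥ 0`, with equality at `(0, 0, 1)`.
Equality forces `M₀ w₂ = 0`, and then `P_I = a₀` is at most `‖u‖² = 1 - Q₂`, where `u` is the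
component of `w₁` orthogonal to `w₂`. Conversely, `M₀ = t ‖u‖⁻⁴ uu*`, `M₁ = 0`, `M₂ = 1 - M₀` is
optimal with `P_I = t` for every `t ∈ [0, 1 - Q₂]`. For `q > 1 - C₁`, taking `t = 1 - Q₂ > 0`
beats `q₂`, which bounds `P̄_cor` for every POVM with `P_I = 0`; hence `q₀⁽⁰⁾ = 1 - C₁`.
-/
open Matrix ComplexOrder

noncomputable section

namespace FRIR

section QuadraticForm

variable {n : Type*} [Fintype n]

def qform (M : Matrix n n ℂ) (w : n → ℂ) : ℝ := (star w ⬝ᵥ (M *ᵥ w)).re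

lemma qform_add (A B : Matrix n n ℂ) (w : n → ℂ) :
    qform (A + B) w = qform A w + qform B w := by
  simp [qform, add_mulVec]

lemma qform_one_sub [DecidableEq n] (M : Matrix n n ℂ) (w : n → ℂ) :
    qform (1 - M) w = (star w ⬝ᵥ w).re - qform M w := by
  simp [qform, sub_mulVec]

lemma qform_smul_vecMulVec (c : ℝ) (u w : n → ℂ) :
    qform ((c : ℂ) • vecMulVec u (star u)) w = c * ‖star u ⬝ᵥ w‖ ^ 2 := by
  rw [qform, smul_mulVec, vecMulVec_mulVec, dotProduct_smul, dotProduct_smul,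
    star_dotProduct w u]
  simp [Complex.sq_norm, Complex.normSq_apply]

lemma _root_.Matrix.IsHermitian.star_dotProduct_mulVec_eq_qform {M : Matrix n n ℂ}
    (hM : M.IsHermitian) (w : n → ℂ) : star w ⬝ᵥ (M *ᵥ w) = (qform M w : ℂ) := by
  refine (Complex.conj_eq_iff_re.mp ?_).symm
  rw [← Complex.star_def, ← star_dotProduct, star_mulVec, ← dotProduct_mulVec, hM.eq]

lemma _root_.Matrix.PosSemidef.qform_nonneg {M : Matrix n n ℂ} (hM : M.PosSemidef)
    (w : n → ℂ) : 0 ≤ qform M w := by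
  simpa [hM.1.star_dotProduct_mulVec_eq_qform] using hM.dotProduct_mulVec_nonneg w

lemma _root_.Matrix.PosSemidef.mulVec_eq_zero_of_qform_eq_zero {M : Matrix n n ℂ}
    (hM : M.PosSemidef) {w : n → ℂ} (h : qform M w = 0) : M *ᵥ w = 0 :=
  (hM.dotProduct_mulVec_zero_iff w).mp (by simp [hM.1.star_dotProduct_mulVec_eq_qform, h])

lemma norm_star_dotProduct_sq_le (u w : n → ℂ) :
    ‖star u ⬝ᵥ w‖ ^ 2 ≤ (star u ⬝ᵥ u).re * (star w ⬝ᵥ w).re := by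
  have h := inner_mul_inner_self_le (𝕜 := ℂ) (WithLp.toLp 2 u) (WithLp.toLp 2 w)
  simp only [EuclideanSpace.inner_toLp_toLp, dotProduct_comm _ (star _)] at h
  rw [star_dotProduct w u, norm_star] at h
  simpa [sq] using h

lemma posSemidef_one_sub_smul_vecMulVec [DecidableEq n] {c : ℝ} (hc : 0 ≤ c) {u : n → ℂ}
    (hcu : c * (star u ⬝ᵥ u).re ≤ 1) :
    (1 - (c : ℂ) • vecMulVec u (star u)).PosSemidef := by
  have hH : (1 - (c : ℂ) • vecMulVec u (star u)).IsHermitian :=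
    isHermitian_one.sub ((posSemidef_vecMulVec_self_star u).smul (by exact_mod_cast hc)).1
  refine .of_dotProduct_mulVec_nonneg hH fun x => ?_
  rw [hH.star_dotProduct_mulVec_eq_qform, Complex.zero_le_real, qform_one_sub,
    qform_smul_vecMulVec, sub_nonneg]
  have hx : 0 ≤ (star x ⬝ᵥ x).re := (Complex.nonneg_iff.mp (dotProduct_star_self_nonneg x)).1
  calc c * ‖star u ⬝ᵥ x‖ ^ 2 ≤ c * ((star u ⬝ᵥ u).re * (star x ⬝ᵥ x).re) :=
        mul_le_mul_of_nonneg_left (norm_star_dotProduct_sq_le u x) hc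
    _ ≤ 1 * (star x ⬝ᵥ x).re := by rw [← mul_assoc]; exact mul_le_mul_of_nonneg_right hcu hx
    _ = (star x ⬝ᵥ x).re := one_mul _

lemma re_trace_conj_mul {S : Matrix n n ℂ} (hS : S.IsHermitian) (a b : ℝ) (ν₁ ν₂ : n → ℂ)
    (M : Matrix n n ℂ) :
    (trace (S * ((a : ℂ) • vecMulVec ν₁ (star ν₁) + (b : ℂ) • vecMulVec ν₂ (star ν₂)) * S
      * M)).re = a * qform M (S *ᵥ ν₁) + b * qform M (S *ᵥ ν₂) := by
  have h (ν : n → ℂ) :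
      trace (S * vecMulVec ν (star ν) * S * M) = star (S *ᵥ ν) ⬝ᵥ (M *ᵥ (S *ᵥ ν)) := by
    rw [mul_vecMulVec, vecMulVec_mul, vecMulVec_mul, trace_vecMulVec, dotProduct_comm,
      ← dotProduct_mulVec, star_mulVec, hS.eq]
  simp only [mul_add, add_mul, mul_smul_comm, smul_mul_assoc, trace_add, trace_smul, h]
  simp [qform]

lemma star_mulVec_dotProduct_mulVec (S : Matrix n n ℂ) (a b : n → ℂ) :
    star (S *ᵥ a) ⬝ᵥ (S *ᵥ b) = star a ⬝ᵥ ((Sᴴ * S) *ᵥ b) := by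
  simp [star_mulVec, dotProduct_mulVec, vecMul_vecMul]

end QuadraticForm

section OrthComponent

variable {n : Type*} [Fintype n]

def orthComponent (v w : n → ℂ) : n → ℂ := w - (star v ⬝ᵥ w / star v ⬝ᵥ v) • v

lemma star_dotProduct_self_eq_re (v : n → ℂ) : star v ⬝ᵥ v = ((star v ⬝ᵥ v).re : ℂ) :=
  Complex.ext rfl (Complex.nonneg_iff.mp (dotProduct_star_self_nonneg v)).2.symm

lemma star_dotProduct_orthComponent (v w : n → ℂ) : star v ⬝ᵥ orthComponent v w = 0 := by
  rcases eq_or_ne v 0 with rfl | hv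
  · simp
  rw [orthComponent, dotProduct_sub, dotProduct_smul, smul_eq_mul,
    div_mul_cancel₀ _ (dotProduct_star_self_eq_zero.not.mpr hv), sub_self]

lemma star_orthComponent_dotProduct (v w : n → ℂ) : star (orthComponent v w) ⬝ᵥ v = 0 := by
  rw [star_dotProduct, star_dotProduct_orthComponent, star_zero]

lemma star_orthComponent_dotProduct_right (v w : n → ℂ) :
    star (orthComponent v w) ⬝ᵥ w = star (orthComponent v w) ⬝ᵥ orthComponent v w := by
  conv_rhs => rw [orthComponent]
  rw [dotProduct_sub, dotProduct_smul, ← orthComponent, star_orthComponent_dotProduct,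
    smul_zero, sub_zero]

lemma re_star_orthComponent_dotProduct_self (v w : n → ℂ) :
    (star (orthComponent v w) ⬝ᵥ orthComponent v w).re
      = (star w ⬝ᵥ w).re - ‖star w ⬝ᵥ v‖ ^ 2 / (star v ⬝ᵥ v).re := by
  rw [← star_orthComponent_dotProduct_right]
  conv_lhs => rw [orthComponent]
  rw [star_sub, star_smul, sub_dotProduct, smul_dotProduct, star_div₀,
    star_dotProduct_self_eq_re v, Complex.star_def, Complex.conj_ofReal,
    smul_eq_mul, div_mul_eq_mul_div, ← Complex.normSq_eq_conj_mul_self, ← Complex.ofReal_div,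
    Complex.sub_re, Complex.ofReal_re, Complex.ofReal_re, Complex.normSq_eq_norm_sq,
    star_dotProduct w v, norm_star]

lemma qform_orthComponent {M : Matrix n n ℂ} (hM : M.IsHermitian) {v : n → ℂ}
    (hv : M *ᵥ v = 0) (w : n → ℂ) : qform M (orthComponent v w) = qform M w := by
  have hMv : star v ⬝ᵥ (M *ᵥ w) = 0 := by
    rw [dotProduct_mulVec, ← hM.eq, ← star_mulVec, hv, star_zero, zero_dotProduct]
  have hMu : M *ᵥ orthComponent v w = M *ᵥ w := by
    rw [orthComponent, mulVec_sub, mulVec_smul, hv, smul_zero, sub_zero]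
  rw [qform, qform, hMu, orthComponent, star_sub, sub_dotProduct, star_smul, smul_dotProduct,
    hMv, smul_zero, sub_zero]

lemma qform_le_of_mulVec_eq_zero [DecidableEq n] {M : Matrix n n ℂ}
    (hM : (1 - M).PosSemidef) {v : n → ℂ} (hv : M *ᵥ v = 0) (w : n → ℂ) :
    qform M w ≤ (star (orthComponent v w) ⬝ᵥ orthComponent v w).re := by
  have hMH : M.IsHermitian := by simpa using isHermitian_one.sub hM.1
  have h := hM.qform_nonneg (orthComponent v w)
  rw [qform_one_sub, qform_orthComponent hMH hv] at h
  linarith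

lemma exists_qform_eq_of_le [DecidableEq n] (v w : n → ℂ) {t : ℝ} (ht₀ : 0 ≤ t)
    (ht : t ≤ (star (orthComponent v w) ⬝ᵥ orthComponent v w).re) :
    ∃ M : Matrix n n ℂ, M.PosSemidef ∧ (1 - M).PosSemidef ∧ qform M w = t ∧ qform M v = 0 := by
  set u := orthComponent v w
  set r := (star u ⬝ᵥ u).re
  have hc : 0 ≤ t / r ^ 2 := by positivity
  refine ⟨((t / r ^ 2 : ℝ) : ℂ) • vecMulVec u (star u),
    (posSemidef_vecMulVec_self_star u).smul (by exact_mod_cast hc),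
    posSemidef_one_sub_smul_vecMulVec hc ?_, ?_, ?_⟩
  · rcases (ht₀.trans ht).eq_or_lt with hr | hr
    · simp [← hr]
    · rw [sq, ← div_div, div_mul_cancel₀ _ hr.ne']
      exact div_le_one_of_le₀ ht hr.le
  · rw [qform_smul_vecMulVec, star_orthComponent_dotProduct_right, star_dotProduct_self_eq_re,
      Complex.norm_real, Real.norm_eq_abs, sq_abs]
    rcases (ht₀.trans ht).eq_or_lt with hr | hr
    · simp [← hr, le_antisymm (hr ▸ ht) ht₀]
    · exact div_mul_cancel₀ _ (pow_ne_zero 2 hr.ne')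
  · rw [qform_smul_vecMulVec, star_orthComponent_dotProduct]
    simp

lemma re_star_orthComponent_mulVec_pos {S : Matrix n n ℂ}
    (hS : (Sᴴ * S).PosDef) {ν₁ ν₂ : n → ℂ} (hν₁ : ν₁ ≠ 0) (h₁₂ : star ν₁ ⬝ᵥ ν₂ = 0) :
    0 < (star (orthComponent (S *ᵥ ν₂) (S *ᵥ ν₁)) ⬝ᵥ orthComponent (S *ᵥ ν₂) (S *ᵥ ν₁)).re := by
  set y := ν₁ - (star (S *ᵥ ν₂) ⬝ᵥ (S *ᵥ ν₁) / star (S *ᵥ ν₂) ⬝ᵥ (S *ᵥ ν₂)) • ν₂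
  have hy : y ≠ 0 := by
    intro h
    have : star ν₁ ⬝ᵥ y = star ν₁ ⬝ᵥ ν₁ := by simp [y, dotProduct_sub, h₁₂]
    rw [h, dotProduct_zero, eq_comm, dotProduct_star_self_eq_zero] at this
    exact hν₁ this
  have hu : orthComponent (S *ᵥ ν₂) (S *ᵥ ν₁) = S *ᵥ y := by
    rw [orthComponent, mulVec_sub, mulVec_smul]
  rw [hu, star_mulVec_dotProduct_mulVec]
  exact (Complex.pos_iff.mp (hS.dotProduct_mulVec_pos hy)).1

end OrthComponent

lemma vecMulVec_add_vecMulVec_eq_one {ν₁ ν₂ : Fin 2 → ℂ} (h₁ : star ν₁ ⬝ᵥ ν₁ = 1)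
    (h₂ : star ν₂ ⬝ᵥ ν₂ = 1) (h₁₂ : star ν₁ ⬝ᵥ ν₂ = 0) :
    vecMulVec ν₁ (star ν₁) + vecMulVec ν₂ (star ν₂) = 1 := by
  have h₂₁ : star ν₂ ⬝ᵥ ν₁ = 0 := by rw [star_dotProduct, h₁₂, star_zero]
  set W : Matrix (Fin 2) (Fin 2) ℂ := of ![star ν₁, star ν₂]
  have hW : W * Wᴴ = 1 := by
    ext k l
    simp only [dotProduct, Fin.sum_univ_two, Pi.star_apply] at h₁ h₂ h₁₂ h₂₁
    fin_cases k <;> fin_cases l <;> simpa [W, mul_apply, conjTranspose_apply]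
  rw [← mul_eq_one_comm.mp hW]
  ext i j
  simp [W, mul_apply, Fin.sum_univ_two, vecMulVec_apply]

/-- `ρ₀ = w₁w₁* + w₂w₂*`, `q₁ρ₁ = C₁w₁w₁* + (1-C₂)w₂w₂*` and `q₂ρ₂ = (1-C₁)w₁w₁* + C₂w₂w₂*`,
recorded through the functionals `M ↦ re tr(ρM)` they determine. -/
structure IsEigenFrame (q₁ q₂ : ℝ) (ρ₁ ρ₂ : Matrix (Fin 2) (Fin 2) ℂ) (C₁ C₂ : ℝ)
    (w₁ w₂ : Fin 2 → ℂ) : Prop where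
  re_trace_rho0_mul : ∀ M, (trace (rho0 q₁ q₂ ρ₁ ρ₂ * M)).re = qform M w₁ + qform M w₂
  re_trace_rho1_mul : ∀ M, q₁ * (trace (ρ₁ * M)).re = C₁ * qform M w₁ + (1 - C₂) * qform M w₂
  re_trace_rho2_mul : ∀ M, q₂ * (trace (ρ₂ * M)).re = (1 - C₁) * qform M w₁ + C₂ * qform M w₂

lemma isEigenFrame_of_sq_eq {q₁ q₂ C₁ C₂ : ℝ} {ρ₁ ρ₂ S : Matrix (Fin 2) (Fin 2) ℂ}
    {ν₁ ν₂ : Fin 2 → ℂ} (hS : S.IsHermitian) (hSS : S * S = rho0 q₁ q₂ ρ₁ ρ₂)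
    (hν : vecMulVec ν₁ (star ν₁) + vecMulVec ν₂ (star ν₂) = 1)
    (h₁ : S * ((C₁ : ℂ) • vecMulVec ν₁ (star ν₁)
        + ((1 - C₂ : ℝ) : ℂ) • vecMulVec ν₂ (star ν₂)) * S = (q₁ : ℂ) • ρ₁)
    (h₂ : S * (((1 - C₁ : ℝ) : ℂ) • vecMulVec ν₁ (star ν₁)
        + (C₂ : ℂ) • vecMulVec ν₂ (star ν₂)) * S = (q₂ : ℂ) • ρ₂) :
    IsEigenFrame q₁ q₂ ρ₁ ρ₂ C₁ C₂ (S *ᵥ ν₁) (S *ᵥ ν₂) := by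
  have hre (q : ℝ) (ρ M : Matrix (Fin 2) (Fin 2) ℂ) :
      q * (trace (ρ * M)).re = (trace ((q : ℂ) • ρ * M)).re := by
    rw [smul_mul_assoc, trace_smul, smul_eq_mul, Complex.re_ofReal_mul]
  refine ⟨fun M => ?_, fun M => ?_, fun M => ?_⟩
  · have h₀ : rho0 q₁ q₂ ρ₁ ρ₂ = S * (((1 : ℝ) : ℂ) • vecMulVec ν₁ (star ν₁)
        + ((1 : ℝ) : ℂ) • vecMulVec ν₂ (star ν₂)) * S := by
      simp [hν, hSS]
    rw [h₀, re_trace_conj_mul hS, one_mul, one_mul]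
  · rw [hre, ← h₁, re_trace_conj_mul hS]
  · rw [hre, ← h₂, re_trace_conj_mul hS]

lemma IsPOVM.qform_add_add {M₀ M₁ M₂ : Matrix (Fin 2) (Fin 2) ℂ} (hM : IsPOVM M₀ M₁ M₂)
    (w : Fin 2 → ℂ) : qform M₀ w + qform M₁ w + qform M₂ w = (star w ⬝ᵥ w).re := by
  rw [← qform_add, ← qform_add, hM.2.2.2]
  simp [qform]

namespace IsEigenFrame

variable {q₁ q₂ C₁ C₂ : ℝ} {ρ₁ ρ₂ : Matrix (Fin 2) (Fin 2) ℂ} {w₁ w₂ : Fin 2 → ℂ}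
  {M₀ M₁ M₂ : Matrix (Fin 2) (Fin 2) ℂ}

lemma PIof_eq (hF : IsEigenFrame q₁ q₂ ρ₁ ρ₂ C₁ C₂ w₁ w₂) (M : Matrix (Fin 2) (Fin 2) ℂ) :
    PIof q₁ q₂ ρ₁ ρ₂ M = qform M w₁ + qform M w₂ :=
  hF.re_trace_rho0_mul M

lemma PbarCor_eq (hF : IsEigenFrame q₁ q₂ ρ₁ ρ₂ C₁ C₂ w₁ w₂) (q : ℝ) :
    PbarCor q q₁ q₂ ρ₁ ρ₂ M₀ M₁ M₂ = q * (qform M₀ w₁ + qform M₀ w₂)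
      + (C₁ * qform M₁ w₁ + (1 - C₂) * qform M₁ w₂)
      + ((1 - C₁) * qform M₂ w₁ + C₂ * qform M₂ w₂) := by
  rw [PbarCor, Pcor, hF.PIof_eq, hF.re_trace_rho1_mul, hF.re_trace_rho2_mul]
  ring

lemma q₂_eq (hF : IsEigenFrame q₁ q₂ ρ₁ ρ₂ C₁ C₂ w₁ w₂) (htr₂ : ρ₂.trace = 1) :
    q₂ = (1 - C₁) * (star w₁ ⬝ᵥ w₁).re + C₂ * (star w₂ ⬝ᵥ w₂).re := by
  simpa [htr₂, qform] using hF.re_trace_rho2_mul 1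

lemma re_star_dotProduct_self_add_eq_one (hF : IsEigenFrame q₁ q₂ ρ₁ ρ₂ C₁ C₂ w₁ w₂)
    (hq : q₁ + q₂ = 1) (htr₁ : ρ₁.trace = 1) (htr₂ : ρ₂.trace = 1) :
    (star w₁ ⬝ᵥ w₁).re + (star w₂ ⬝ᵥ w₂).re = 1 := by
  have h := hF.re_trace_rho0_mul 1
  simp only [mul_one, rho0, trace_add, trace_smul, htr₁, htr₂, qform, one_mulVec, smul_eq_mul] at h
  simpa [hq] using h.symm

lemma PIof_nonneg (hF : IsEigenFrame q₁ q₂ ρ₁ ρ₂ C₁ C₂ w₁ w₂) (hM₀ : M₀.PosSemidef) :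
    0 ≤ PIof q₁ q₂ ρ₁ ρ₂ M₀ := by
  rw [hF.PIof_eq]
  exact add_nonneg (hM₀.qform_nonneg w₁) (hM₀.qform_nonneg w₂)

lemma sub_PbarCor_eq (hF : IsEigenFrame q₁ q₂ ρ₁ ρ₂ C₁ C₂ w₁ w₂) (htr₂ : ρ₂.trace = 1)
    (hM : IsPOVM M₀ M₁ M₂) :
    q₂ - PbarCor (1 - C₁) q₁ q₂ ρ₁ ρ₂ M₀ M₁ M₂ = (C₁ + C₂ - 1) * qform M₀ w₂
      + (1 - 2 * C₁) * qform M₁ w₁ + (2 * C₂ - 1) * qform M₁ w₂ := by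
  rw [hF.PbarCor_eq, hF.q₂_eq htr₂, ← hM.qform_add_add w₁, ← hM.qform_add_add w₂]
  ring

lemma PbarCor_le (hF : IsEigenFrame q₁ q₂ ρ₁ ρ₂ C₁ C₂ w₁ w₂) (htr₂ : ρ₂.trace = 1)
    (hC₁ : C₁ ≤ 1 / 2) (hC : 1 < C₁ + C₂) (hM : IsPOVM M₀ M₁ M₂) :
    PbarCor (1 - C₁) q₁ q₂ ρ₁ ρ₂ M₀ M₁ M₂ ≤ q₂ := by
  have h := hF.sub_PbarCor_eq htr₂ hM
  have := mul_nonneg (by linarith : 0 ≤ C₁ + C₂ - 1) (hM.1.qform_nonneg w₂)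
  have := mul_nonneg (by linarith : 0 ≤ 1 - 2 * C₁) (hM.2.1.qform_nonneg w₁)
  have := mul_nonneg (by linarith : 0 ≤ 2 * C₂ - 1) (hM.2.1.qform_nonneg w₂)
  linarith

lemma qform_eq_zero_of_PbarCor_eq (hF : IsEigenFrame q₁ q₂ ρ₁ ρ₂ C₁ C₂ w₁ w₂)
    (htr₂ : ρ₂.trace = 1) (hC₁ : C₁ ≤ 1 / 2) (hC : 1 < C₁ + C₂) (hM : IsPOVM M₀ M₁ M₂)
    (hopt : PbarCor (1 - C₁) q₁ q₂ ρ₁ ρ₂ M₀ M₁ M₂ = q₂) : qform M₀ w₂ = 0 := by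
  have h := hF.sub_PbarCor_eq htr₂ hM
  have := mul_nonneg (by linarith : 0 ≤ 1 - 2 * C₁) (hM.2.1.qform_nonneg w₁)
  have := mul_nonneg (by linarith : 0 ≤ 2 * C₂ - 1) (hM.2.1.qform_nonneg w₂)
  refine le_antisymm (nonpos_of_mul_nonpos_right ?_ (by linarith : 0 < C₁ + C₂ - 1))
    (hM.1.qform_nonneg w₂)
  linarith

lemma PIof_le_of_PbarCor_eq (hF : IsEigenFrame q₁ q₂ ρ₁ ρ₂ C₁ C₂ w₁ w₂)
    (htr₂ : ρ₂.trace = 1) (hC₁ : C₁ ≤ 1 / 2) (hC : 1 < C₁ + C₂) (hM : IsPOVM M₀ M₁ M₂)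
    (hopt : PbarCor (1 - C₁) q₁ q₂ ρ₁ ρ₂ M₀ M₁ M₂ = q₂) :
    PIof q₁ q₂ ρ₁ ρ₂ M₀ ≤ (star (orthComponent w₂ w₁) ⬝ᵥ orthComponent w₂ w₁).re := by
  have h₀ := hF.qform_eq_zero_of_PbarCor_eq htr₂ hC₁ hC hM hopt
  have hM₀ : (1 - M₀).PosSemidef := by
    rw [← hM.2.2.2, add_assoc, add_sub_cancel_left]
    exact hM.2.1.add hM.2.2.1
  rw [hF.PIof_eq, h₀, add_zero]
  exact qform_le_of_mulVec_eq_zero hM₀ (hM.1.mulVec_eq_zero_of_qform_eq_zero h₀) w₁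

lemma Pcor_le (hF : IsEigenFrame q₁ q₂ ρ₁ ρ₂ C₁ C₂ w₁ w₂)
    (htr₂ : ρ₂.trace = 1) (hC₁ : C₁ ≤ 1 / 2) (hC : 1 < C₁ + C₂) (hM : IsPOVM M₀ M₁ M₂) :
    Pcor q₁ q₂ ρ₁ ρ₂ M₁ M₂ ≤ q₂ := by
  have h := hF.PbarCor_le htr₂ hC₁ hC hM
  have := mul_nonneg (by linarith : 0 ≤ 1 - C₁) (hF.PIof_nonneg hM.1)
  rw [PbarCor] at h
  linarith

lemma bddAbove_PbarCor (hF : IsEigenFrame q₁ q₂ ρ₁ ρ₂ C₁ C₂ w₁ w₂)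
    (htr₂ : ρ₂.trace = 1) (hC₁ : C₁ ≤ 1 / 2) (hC : 1 < C₁ + C₂) {q : ℝ} (hq : 0 ≤ q) :
    BddAbove {x | ∃ M₀ M₁ M₂, IsPOVM M₀ M₁ M₂ ∧ PbarCor q q₁ q₂ ρ₁ ρ₂ M₀ M₁ M₂ = x} := by
  refine ⟨q * ((star w₁ ⬝ᵥ w₁).re + (star w₂ ⬝ᵥ w₂).re) + q₂, ?_⟩
  rintro _ ⟨M₀, M₁, M₂, hM, rfl⟩
  have hPI : PIof q₁ q₂ ρ₁ ρ₂ M₀ ≤ (star w₁ ⬝ᵥ w₁).re + (star w₂ ⬝ᵥ w₂).re := by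
    rw [hF.PIof_eq, ← hM.qform_add_add w₁, ← hM.qform_add_add w₂]
    linarith [hM.2.1.qform_nonneg w₁, hM.2.1.qform_nonneg w₂, hM.2.2.1.qform_nonneg w₁,
      hM.2.2.1.qform_nonneg w₂]
  rw [PbarCor]
  exact add_le_add (mul_le_mul_of_nonneg_left hPI hq) (hF.Pcor_le htr₂ hC₁ hC hM)

lemma exists_isPOVM_PIof_eq (hF : IsEigenFrame q₁ q₂ ρ₁ ρ₂ C₁ C₂ w₁ w₂)
    (htr₂ : ρ₂.trace = 1) {t : ℝ} (ht₀ : 0 ≤ t)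
    (ht : t ≤ (star (orthComponent w₂ w₁) ⬝ᵥ orthComponent w₂ w₁).re) :
    ∃ M₀ M₁ M₂, IsPOVM M₀ M₁ M₂ ∧ PIof q₁ q₂ ρ₁ ρ₂ M₀ = t ∧
      ∀ q, PbarCor q q₁ q₂ ρ₁ ρ₂ M₀ M₁ M₂ = q₂ + (q - (1 - C₁)) * t := by
  obtain ⟨M, hM, hM', h₁, h₂⟩ := exists_qform_eq_of_le w₂ w₁ ht₀ ht
  refine ⟨M, 0, 1 - M, ⟨hM, .zero, hM', by abel⟩, by rw [hF.PIof_eq, h₁, h₂, add_zero],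
    fun q => ?_⟩
  rw [hF.PbarCor_eq, hF.q₂_eq htr₂, qform_one_sub, qform_one_sub, h₁, h₂]
  simp only [qform, zero_mulVec, dotProduct_zero, Complex.zero_re]
  ring

lemma PbarOpt_eq (hF : IsEigenFrame q₁ q₂ ρ₁ ρ₂ C₁ C₂ w₁ w₂)
    (htr₂ : ρ₂.trace = 1) (hC₁ : C₁ ≤ 1 / 2) (hC : 1 < C₁ + C₂) :
    PbarOpt (1 - C₁) q₁ q₂ ρ₁ ρ₂ = q₂ := by
  refine IsGreatest.csSup_eq ⟨⟨0, 0, 1, ⟨.zero, .zero, .one, by simp⟩, ?_⟩, ?_⟩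
  · simp [PbarCor, Pcor, PIof, htr₂]
  · rintro _ ⟨M₀, M₁, M₂, hM, rfl⟩
    exact hF.PbarCor_le htr₂ hC₁ hC hM

lemma PIset_eq (hF : IsEigenFrame q₁ q₂ ρ₁ ρ₂ C₁ C₂ w₁ w₂)
    (htr₂ : ρ₂.trace = 1) (hC₁ : C₁ ≤ 1 / 2) (hC : 1 < C₁ + C₂) :
    PIset (1 - C₁) q₁ q₂ ρ₁ ρ₂
      = Set.Icc 0 (star (orthComponent w₂ w₁) ⬝ᵥ orthComponent w₂ w₁).re := by
  ext Q
  rw [PIset, hF.PbarOpt_eq htr₂ hC₁ hC]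
  constructor
  · rintro ⟨M₀, M₁, M₂, hM, hopt, rfl⟩
    exact ⟨hF.PIof_nonneg hM.1, hF.PIof_le_of_PbarCor_eq htr₂ hC₁ hC hM hopt⟩
  · rintro ⟨hQ₀, hQ⟩
    obtain ⟨M₀, M₁, M₂, hM, hPI, hval⟩ := hF.exists_isPOVM_PIof_eq htr₂ hQ₀ hQ
    exact ⟨M₀, M₁, M₂, hM, by rw [hval, sub_self, zero_mul, add_zero], hPI⟩

lemma q0low_eq (hF : IsEigenFrame q₁ q₂ ρ₁ ρ₂ C₁ C₂ w₁ w₂)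
    (htr₂ : ρ₂.trace = 1) (hC₁ : C₁ ≤ 1 / 2) (hC : 1 < C₁ + C₂)
    (hu : 0 < (star (orthComponent w₂ w₁) ⬝ᵥ orthComponent w₂ w₁).re) :
    q0low q₁ q₂ ρ₁ ρ₂ = 1 - C₁ := by
  refine IsGreatest.csSup_eq ⟨⟨by linarith, ?_⟩, ?_⟩
  · rw [hF.PIset_eq htr₂ hC₁ hC]
    exact ⟨le_rfl, hu.le⟩
  rintro q ⟨hq, M₀, M₁, M₂, hM, hopt, hPI⟩
  by_contra! hlt
  obtain ⟨N₀, N₁, N₂, hN, -, hval⟩ := hF.exists_isPOVM_PIof_eq htr₂ hu.le le_rfl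
  have hbetter : q₂ + (q - (1 - C₁)) * (star (orthComponent w₂ w₁) ⬝ᵥ orthComponent w₂ w₁).re
      ≤ PbarOpt q q₁ q₂ ρ₁ ρ₂ :=
    hval q ▸ le_csSup (hF.bddAbove_PbarCor htr₂ hC₁ hC hq.le) ⟨N₀, N₁, N₂, hN, rfl⟩
  have hworse : PbarCor q q₁ q₂ ρ₁ ρ₂ M₀ M₁ M₂ ≤ q₂ := by
    rw [PbarCor, hPI, mul_zero, zero_add]
    exact hF.Pcor_le htr₂ hC₁ hC hM
  linarith [mul_pos (sub_pos.mpr hlt) hu]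

end IsEigenFrame

theorem stmt8_general
    (q₁ q₂ : ℝ) (ρ₁ ρ₂ : Matrix (Fin 2) (Fin 2) ℂ)
    (hq : q₁ + q₂ = 1)
    (htr₁ : ρ₁.trace = 1)
    (htr₂ : ρ₂.trace = 1)
    (hρ0 : (rho0 q₁ q₂ ρ₁ ρ₂).PosDef)
    (S : Matrix (Fin 2) (Fin 2) ℂ) (hS : S.PosSemidef) (hSS : S * S = rho0 q₁ q₂ ρ₁ ρ₂)
    (ν₁ ν₂ : Fin 2 → ℂ)
    (hν₁ : star ν₁ ⬝ᵥ ν₁ = 1) (hν₂ : star ν₂ ⬝ᵥ ν₂ = 1) (hν₁₂ : star ν₁ ⬝ᵥ ν₂ = 0)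
    (C₁ C₂ : ℝ) (hCsum : 1 < C₁ + C₂)
    (hbar₁ : S * ((C₁ : ℂ) • vecMulVec ν₁ (star ν₁)
        + ((1 - C₂ : ℝ) : ℂ) • vecMulVec ν₂ (star ν₂)) * S = (q₁ : ℂ) • ρ₁)
    (hbar₂ : S * (((1 - C₁ : ℝ) : ℂ) • vecMulVec ν₁ (star ν₁)
        + (C₂ : ℂ) • vecMulVec ν₂ (star ν₂)) * S = (q₂ : ℂ) • ρ₂)
    (ρ11 ρ22 : ℝ) (ρ12 : ℂ)
    (h11 : (ρ11 : ℂ) = star ν₁ ⬝ᵥ (rho0 q₁ q₂ ρ₁ ρ₂ *ᵥ ν₁))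
    (h22 : (ρ22 : ℂ) = star ν₂ ⬝ᵥ (rho0 q₁ q₂ ρ₁ ρ₂ *ᵥ ν₂))
    (h12 : ρ12 = star ν₁ ⬝ᵥ (rho0 q₁ q₂ ρ₁ ρ₂ *ᵥ ν₂))
    (hC₁ : C₁ ≤ 1 / 2) :
    PbarOpt (1 - C₁) q₁ q₂ ρ₁ ρ₂ = q₂ ∧
      PIset (1 - C₁) q₁ q₂ ρ₁ ρ₂ = Set.Icc 0 (1 - (ρ22 + ‖ρ12‖ ^ 2 / ρ22)) ∧
      q0low q₁ q₂ ρ₁ ρ₂ = 1 - C₁ := by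
  set w₁ := S *ᵥ ν₁
  set w₂ := S *ᵥ ν₂
  have hF : IsEigenFrame q₁ q₂ ρ₁ ρ₂ C₁ C₂ w₁ w₂ := isEigenFrame_of_sq_eq hS.1 hSS
    (vecMulVec_add_vecMulVec_eq_one hν₁ hν₂ hν₁₂) hbar₁ hbar₂
  have hgram (a b : Fin 2 → ℂ) :
      star (S *ᵥ a) ⬝ᵥ (S *ᵥ b) = star a ⬝ᵥ (rho0 q₁ q₂ ρ₁ ρ₂ *ᵥ b) := by
    rw [star_mulVec_dotProduct_mulVec, hS.1, hSS]
  have r₁₁ : star w₁ ⬝ᵥ w₁ = ρ11 := (hgram ν₁ ν₁).trans h11.symm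
  have r₂₂ : star w₂ ⬝ᵥ w₂ = ρ22 := (hgram ν₂ ν₂).trans h22.symm
  have r₁₂ : star w₁ ⬝ᵥ w₂ = ρ12 := (hgram ν₁ ν₂).trans h12.symm
  have hQ₂ : 1 - (ρ22 + ‖ρ12‖ ^ 2 / ρ22)
      = (star (orthComponent w₂ w₁) ⬝ᵥ orthComponent w₂ w₁).re := by
    have h := hF.re_star_dotProduct_self_add_eq_one hq htr₁ htr₂
    rw [r₁₁, r₂₂, Complex.ofReal_re, Complex.ofReal_re] at h
    rw [re_star_orthComponent_dotProduct_self, r₁₁, r₂₂, r₁₂, Complex.ofReal_re,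
      Complex.ofReal_re]
    linarith
  have hu := re_star_orthComponent_mulVec_pos (by rwa [hS.1, hSS])
    (by rintro rfl; simp at hν₁) hν₁₂
  exact ⟨hF.PbarOpt_eq htr₂ hC₁ hCsum, hQ₂ ▸ hF.PIset_eq htr₂ hC₁ hCsum,
    hF.q0low_eq htr₂ hC₁ hCsum hu⟩

/-- If `C₁ ≤ 1/2 < C₂`, then `P̄_cor^opt(1−C₁) = q₂` and
`P_I(1−C₁) = [0, 1−Q₂]`; consequently `q₀⁽⁰⁾ = 1−C₁`. -/
theorem stmt8
    (q₁ q₂ : ℝ) (ρ₁ ρ₂ : Matrix (Fin 2) (Fin 2) ℂ)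
    (hq₁ : 0 < q₁) (hq₂ : 0 < q₂) (hq : q₁ + q₂ = 1)
    (hρ₁ : ρ₁.PosSemidef) (htr₁ : ρ₁.trace = 1)
    (hρ₂ : ρ₂.PosSemidef) (htr₂ : ρ₂.trace = 1)
    (hρ0 : (rho0 q₁ q₂ ρ₁ ρ₂).PosDef)
    (S : Matrix (Fin 2) (Fin 2) ℂ) (hS : S.PosSemidef) (hSS : S * S = rho0 q₁ q₂ ρ₁ ρ₂)
    (ν₁ ν₂ : Fin 2 → ℂ)
    (hν₁ : star ν₁ ⬝ᵥ ν₁ = 1) (hν₂ : star ν₂ ⬝ᵥ ν₂ = 1) (hν₁₂ : star ν₁ ⬝ᵥ ν₂ = 0)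
    (C₁ C₂ : ℝ) (hC12 : C₁ ≤ C₂) (hCsum : 1 < C₁ + C₂)
    (hbar₁ : S * ((C₁ : ℂ) • vecMulVec ν₁ (star ν₁)
        + ((1 - C₂ : ℝ) : ℂ) • vecMulVec ν₂ (star ν₂)) * S = (q₁ : ℂ) • ρ₁)
    (hbar₂ : S * (((1 - C₁ : ℝ) : ℂ) • vecMulVec ν₁ (star ν₁)
        + (C₂ : ℂ) • vecMulVec ν₂ (star ν₂)) * S = (q₂ : ℂ) • ρ₂)
    (ρ11 ρ22 : ℝ) (ρ12 : ℂ)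
    (h11 : (ρ11 : ℂ) = star ν₁ ⬝ᵥ (rho0 q₁ q₂ ρ₁ ρ₂ *ᵥ ν₁))
    (h22 : (ρ22 : ℂ) = star ν₂ ⬝ᵥ (rho0 q₁ q₂ ρ₁ ρ₂ *ᵥ ν₂))
    (h12 : ρ12 = star ν₁ ⬝ᵥ (rho0 q₁ q₂ ρ₁ ρ₂ *ᵥ ν₂))
    (hC₁ : C₁ ≤ 1 / 2) (hC₂ : 1 / 2 < C₂) :
    PbarOpt (1 - C₁) q₁ q₂ ρ₁ ρ₂ = q₂ ∧
      PIset (1 - C₁) q₁ q₂ ρ₁ ρ₂ = Set.Icc 0 (1 - (ρ22 + ‖ρ12‖ ^ 2 / ρ22)) ∧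
      q0low q₁ q₂ ρ₁ ρ₂ = 1 - C₁ :=
  stmt8_general q₁ q₂ ρ₁ ρ₂ hq htr₁ htr₂ hρ0 S hS hSS ν₁ ν₂ hν₁ hν₂ hν₁₂ C₁ C₂ hCsum hbar₁ hbar₂ ρ11
    ρ22 ρ12 h11 h22 h12 hC₁

end FRIR
end
end

section
/- If C_1 ≤ 1/2 < C_2, then for every Q ∈ [0, 1−Q_2], P_cor^opt(Q) = q_2 − (1−C_1)Q; equivalently, R_cor^opt(Q) = P_cor^opt(Q)/(1−Q) = (1−C_1) + (C_1−q_1)/(1−Q). -/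
open Matrix ComplexOrder

noncomputable section

namespace FRIR

/-!
Whitening by `S = ρ₀^{1/2}` turns a POVM `(M₀, M₁, M₂)` into a decomposition `ρ₀ = N₀ + N₁ + N₂`
into positive parts `Nₖ = S Mₖ S`, with `P_I = tr N₀` and `P_cor = tr(ρ̄₁N₁) + tr(ρ̄₂N₂)`.
Since `tr(ρ̄₂ρ₀) = q₂`, this is `P_cor = q₂ - tr(ρ̄₂N₀) - tr((ρ̄₂ - ρ̄₁)N₁)`. When `C₁ ≤ 1/2 ≤ C₂`
and `C₁ + C₂ ≥ 1`, both `ρ̄₂ - ρ̄₁` and `ρ̄₂ - (1 - C₁)` are positive, so `P_cor ≤ q₂ - (1 - C₁)Q`.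
Equality holds for `N₀ = Q ν₁ν₁*`, `N₁ = 0`, `N₂ = ρ₀ - Q ν₁ν₁*`, and the last operator is positive
exactly when `Q ≤ 1 - Q₂`, by the Schur complement of `ρ₀` in the basis `ν₁, ν₂`.
-/

section Generic

variable {n : Type*} [Fintype n]

theorem _root_.Matrix.PosSemidef.trace_mul_nonneg {𝕜 : Type*} [RCLike 𝕜] {A B : Matrix n n 𝕜}
    (hA : A.PosSemidef) (hB : B.PosSemidef) : 0 ≤ (A * B).trace := by
  obtain ⟨m, v, rfl⟩ := posSemidef_iff_eq_sum_vecMulVec.mp hB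
  rw [Matrix.mul_sum, trace_sum]
  refine Finset.sum_nonneg fun i _ => ?_
  rw [mul_vecMulVec, trace_vecMulVec, dotProduct_comm]
  exact hA.dotProduct_mulVec_nonneg (v i)

lemma isUnit_of_isUnit_mul_self [DecidableEq n] {R : Type*} [CommRing R] {S : Matrix n n R}
    (h : IsUnit (S * S)) : IsUnit S := by
  rw [isUnit_iff_isUnit_det, det_mul] at h
  exact (isUnit_iff_isUnit_det S).mpr (isUnit_of_mul_isUnit_left h)

lemma posSemidef_smul_add_smul_sub (u v : n → ℂ) {a₁ a₂ b₁ b₂ : ℝ}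
    (ha : a₁ ≤ a₂) (hb : b₁ ≤ b₂) :
    ((a₂ : ℂ) • vecMulVec u (star u) + (b₂ : ℂ) • vecMulVec v (star v)
      - ((a₁ : ℂ) • vecMulVec u (star u) + (b₁ : ℂ) • vecMulVec v (star v))).PosSemidef := by
  have h : (a₂ : ℂ) • vecMulVec u (star u) + (b₂ : ℂ) • vecMulVec v (star v)
      - ((a₁ : ℂ) • vecMulVec u (star u) + (b₁ : ℂ) • vecMulVec v (star v))
      = ((a₂ - a₁ : ℝ) : ℂ) • vecMulVec u (star u)
        + ((b₂ - b₁ : ℝ) : ℂ) • vecMulVec v (star v) := by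
    push_cast
    module
  rw [h]
  exact ((posSemidef_vecMulVec_self_star u).smul (Complex.zero_le_real.mpr (by linarith))).add
    ((posSemidef_vecMulVec_self_star v).smul (Complex.zero_le_real.mpr (by linarith)))

lemma trace_smul_add_smul_mul_vecMulVec {ν₁ ν₂ : n → ℂ}
    (h₁ : star ν₁ ⬝ᵥ ν₁ = 1) (h₁₂ : star ν₁ ⬝ᵥ ν₂ = 0) (a b : ℂ) :
    ((a • vecMulVec ν₁ (star ν₁) + b • vecMulVec ν₂ (star ν₂)) * vecMulVec ν₁ (star ν₁)).trace
      = a := by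
  have h₂₁ : star ν₂ ⬝ᵥ ν₁ = 0 := by rw [star_dotProduct, h₁₂, star_zero]
  rw [Matrix.add_mul, smul_mul_assoc, smul_mul_assoc, vecMulVec_mul_vecMulVec,
    vecMulVec_mul_vecMulVec, h₁, h₂₁, one_smul, zero_smul, vecMulVec_zero, smul_zero, add_zero,
    trace_smul, trace_vecMulVec, dotProduct_comm, h₁, smul_eq_mul, mul_one]

lemma re_trace_mul_eq_of_conj {q : ℝ} {S R ρ : Matrix n n ℂ}
    (h : S * R * S = (q : ℂ) • ρ) (M : Matrix n n ℂ) :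
    q * (ρ * M).trace.re = (R * (S * M * S)).trace.re := by
  rw [← Complex.re_ofReal_mul, ← smul_eq_mul, ← trace_smul, ← smul_mul_assoc, ← h,
    Matrix.mul_assoc, Matrix.mul_assoc, trace_mul_comm, Matrix.mul_assoc, Matrix.mul_assoc]

lemma re_trace_add_le [DecidableEq n] {R₁ R₂ N₀ N₁ N₂ : Matrix n n ℂ} {c : ℝ}
    (h₂₁ : (R₂ - R₁).PosSemidef) (h₂c : (R₂ - (c : ℂ) • 1).PosSemidef)
    (hN₀ : N₀.PosSemidef) (hN₁ : N₁.PosSemidef) :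
    (R₁ * N₁).trace.re + (R₂ * N₂).trace.re
      ≤ (R₂ * (N₀ + N₁ + N₂)).trace.re - c * N₀.trace.re := by
  have h₁ := (Complex.nonneg_iff.mp (h₂₁.trace_mul_nonneg hN₁)).1
  have h₀ := (Complex.nonneg_iff.mp (h₂c.trace_mul_nonneg hN₀)).1
  simp only [Matrix.sub_mul, Matrix.mul_add, smul_mul_assoc, Matrix.one_mul, trace_sub, trace_add,
    trace_smul, smul_eq_mul, Complex.sub_re, Complex.add_re, Complex.re_ofReal_mul] at h₀ h₁ ⊢
  linarith

end Generic

section Resolution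

variable {n : Type*} [Fintype n] [DecidableEq n] {ν₁ ν₂ : n → ℂ}
  (hres : vecMulVec ν₁ (star ν₁) + vecMulVec ν₂ (star ν₂) = 1)
include hres

lemma eq_smul_add_smul_of_resolution (x : n → ℂ) :
    x = (star ν₁ ⬝ᵥ x) • ν₁ + (star ν₂ ⬝ᵥ x) • ν₂ := by
  conv_lhs => rw [← one_mulVec x, ← hres]
  simp only [add_mulVec, vecMulVec_mulVec, op_smul_eq_smul]

lemma eq_sum_vecMulVec_of_resolution (A : Matrix n n ℂ) :
    A = (star ν₁ ⬝ᵥ A *ᵥ ν₁) • vecMulVec ν₁ (star ν₁)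
      + (star ν₁ ⬝ᵥ A *ᵥ ν₂) • vecMulVec ν₁ (star ν₂)
      + (star ν₂ ⬝ᵥ A *ᵥ ν₁) • vecMulVec ν₂ (star ν₁)
      + (star ν₂ ⬝ᵥ A *ᵥ ν₂) • vecMulVec ν₂ (star ν₂) := by
  calc A = (vecMulVec ν₁ (star ν₁) + vecMulVec ν₂ (star ν₂)) * A
        * (vecMulVec ν₁ (star ν₁) + vecMulVec ν₂ (star ν₂)) := by
        rw [hres, Matrix.one_mul, Matrix.mul_one]
    _ = _ := by
      simp only [Matrix.add_mul, Matrix.mul_add, vecMulVec_mul, vecMul_vecMulVec,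
        vecMulVec_smul, ← dotProduct_mulVec]
      abel

lemma trace_eq_add_of_resolution (A : Matrix n n ℂ) :
    A.trace = star ν₁ ⬝ᵥ A *ᵥ ν₁ + star ν₂ ⬝ᵥ A *ᵥ ν₂ := by
  conv_lhs => rw [← Matrix.mul_one A, ← hres]
  rw [Matrix.mul_add, trace_add, mul_vecMulVec, mul_vecMulVec, trace_vecMulVec, trace_vecMulVec,
    dotProduct_comm, dotProduct_comm (A *ᵥ ν₂)]

lemma smul_eq_schur_add_vecMulVec {A : Matrix n n ℂ} (hA : A.IsHermitian) :
    (star ν₂ ⬝ᵥ A *ᵥ ν₂) • A =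
      ((star ν₁ ⬝ᵥ A *ᵥ ν₁) * (star ν₂ ⬝ᵥ A *ᵥ ν₂)
        - (star ν₁ ⬝ᵥ A *ᵥ ν₂) * star (star ν₁ ⬝ᵥ A *ᵥ ν₂)) • vecMulVec ν₁ (star ν₁)
      + vecMulVec (A *ᵥ ν₂) (star (A *ᵥ ν₂)) := by
  have hA_eq := eq_sum_vecMulVec_of_resolution hres A
  have hAν₂ := eq_smul_add_smul_of_resolution hres (A *ᵥ ν₂)
  set a₁₂ := star ν₁ ⬝ᵥ A *ᵥ ν₂
  set a₂₁ := star ν₂ ⬝ᵥ A *ᵥ ν₁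
  set a₂₂ := star ν₂ ⬝ᵥ A *ᵥ ν₂
  have star_entry : ∀ x y, star (star x ⬝ᵥ A *ᵥ y) = star y ⬝ᵥ A *ᵥ x := fun x y => by
    rw [star_dotProduct, star_mulVec, hA.eq, ← dotProduct_mulVec, star_star]
  have h₂₁ : a₂₁ = star a₁₂ := (star_entry ν₁ ν₂).symm
  have h₂₂ : star a₂₂ = a₂₂ := star_entry ν₂ ν₂
  conv_lhs => rw [hA_eq]
  rw [hAν₂, h₂₁]
  simp only [star_add, star_smul, h₂₂, vecMulVec_add, add_vecMulVec, vecMulVec_smul,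
    smul_vecMulVec]
  module

lemma posSemidef_sub_smul_vecMulVec {A : Matrix n n ℂ} (hA : A.IsHermitian)
    {a₁₁ a₂₂ Q : ℝ} {a₁₂ : ℂ} (h₁₁ : (a₁₁ : ℂ) = star ν₁ ⬝ᵥ A *ᵥ ν₁)
    (h₂₂ : (a₂₂ : ℂ) = star ν₂ ⬝ᵥ A *ᵥ ν₂) (h₁₂ : a₁₂ = star ν₁ ⬝ᵥ A *ᵥ ν₂) (ha₂₂ : 0 < a₂₂)
    (hQ : Q * a₂₂ ≤ a₁₁ * a₂₂ - ‖a₁₂‖ ^ 2) :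
    (A - (Q : ℂ) • vecMulVec ν₁ (star ν₁)).PosSemidef := by
  have hschur := smul_eq_schur_add_vecMulVec hres hA
  rw [← h₁₁, ← h₂₂, ← h₁₂, Complex.star_def, Complex.mul_conj'] at hschur
  have hne : (a₂₂ : ℂ) ≠ 0 := by exact_mod_cast ha₂₂.ne'
  have key : A - (Q : ℂ) • vecMulVec ν₁ (star ν₁) = ((a₂₂⁻¹ : ℝ) : ℂ) •
      (((a₁₁ * a₂₂ - ‖a₁₂‖ ^ 2 - Q * a₂₂ : ℝ) : ℂ) • vecMulVec ν₁ (star ν₁)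
        + vecMulVec (A *ᵥ ν₂) (star (A *ᵥ ν₂))) := by
    apply smul_right_injective _ hne
    dsimp only
    rw [smul_smul]
    push_cast
    rw [mul_inv_cancel₀ hne, one_smul]
    linear_combination (norm := module) hschur
  rw [key]
  refine PosSemidef.smul ?_ (Complex.zero_le_real.mpr (inv_nonneg.mpr ha₂₂.le))
  exact ((posSemidef_vecMulVec_self_star ν₁).smul (Complex.zero_le_real.mpr (by linarith))).add
    (posSemidef_vecMulVec_self_star _)

end Resolution

section Whitening

variable {q₁ q₂ : ℝ} {ρ₁ ρ₂ S R₂ : Matrix (Fin 2) (Fin 2) ℂ}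

lemma PIof_eq_re_trace (hSS : S * S = rho0 q₁ q₂ ρ₁ ρ₂) (M₀ : Matrix (Fin 2) (Fin 2) ℂ) :
    PIof q₁ q₂ ρ₁ ρ₂ M₀ = (S * M₀ * S).trace.re := by
  rw [PIof, ← hSS, ← trace_mul_cycle]

lemma re_trace_mul_rho0 (hSS : S * S = rho0 q₁ q₂ ρ₁ ρ₂) (hbar₂ : S * R₂ * S = (q₂ : ℂ) • ρ₂)
    (htr₂ : ρ₂.trace = 1) : (R₂ * rho0 q₁ q₂ ρ₁ ρ₂).trace.re = q₂ := by
  have h := re_trace_mul_eq_of_conj hbar₂ 1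
  rwa [Matrix.mul_one, htr₂, Complex.one_re, mul_one, Matrix.mul_one, hSS, eq_comm] at h

lemma Pcor_le_of_posSemidef {R₁ : Matrix (Fin 2) (Fin 2) ℂ} {c : ℝ} (hS : Sᴴ = S)
    (hSS : S * S = rho0 q₁ q₂ ρ₁ ρ₂) (hbar₁ : S * R₁ * S = (q₁ : ℂ) • ρ₁)
    (hbar₂ : S * R₂ * S = (q₂ : ℂ) • ρ₂) (htr₂ : ρ₂.trace = 1)
    (h₂₁ : (R₂ - R₁).PosSemidef) (h₂c : (R₂ - (c : ℂ) • 1).PosSemidef)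
    {M₀ M₁ M₂ : Matrix (Fin 2) (Fin 2) ℂ} (hM : IsPOVM M₀ M₁ M₂) :
    Pcor q₁ q₂ ρ₁ ρ₂ M₁ M₂ ≤ q₂ - c * PIof q₁ q₂ ρ₁ ρ₂ M₀ := by
  obtain ⟨hM₀, hM₁, -, hsum⟩ := hM
  have hconj : ∀ {M : Matrix (Fin 2) (Fin 2) ℂ}, M.PosSemidef → (S * M * S).PosSemidef :=
    fun hM => by simpa only [hS] using hM.mul_mul_conjTranspose_same S
  have hN : S * M₀ * S + S * M₁ * S + S * M₂ * S = rho0 q₁ q₂ ρ₁ ρ₂ := by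
    rw [← Matrix.add_mul, ← Matrix.add_mul, ← Matrix.mul_add, ← Matrix.mul_add, hsum,
      Matrix.mul_one, hSS]
  rw [Pcor, re_trace_mul_eq_of_conj hbar₁, re_trace_mul_eq_of_conj hbar₂, PIof_eq_re_trace hSS,
    ← re_trace_mul_rho0 hSS hbar₂ htr₂, ← hN]
  exact re_trace_add_le h₂₁ h₂c (hconj hM₀) (hconj hM₁)

lemma exists_isPOVM_of_posSemidef (hS : Sᴴ = S) (hSu : IsUnit S)
    (hSS : S * S = rho0 q₁ q₂ ρ₁ ρ₂) (hbar₂ : S * R₂ * S = (q₂ : ℂ) • ρ₂) (htr₂ : ρ₂.trace = 1)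
    {N : Matrix (Fin 2) (Fin 2) ℂ} (hN : N.PosSemidef) (hρN : (rho0 q₁ q₂ ρ₁ ρ₂ - N).PosSemidef) :
    ∃ M₀ M₁ M₂, IsPOVM M₀ M₁ M₂ ∧ PIof q₁ q₂ ρ₁ ρ₂ M₀ = N.trace.re ∧
      Pcor q₁ q₂ ρ₁ ρ₂ M₁ M₂ = q₂ - (R₂ * N).trace.re := by
  have hdet := (isUnit_iff_isUnit_det S).mp hSu
  have hT : S⁻¹ᴴ = S⁻¹ := by rw [conjTranspose_nonsing_inv, hS]
  have hconj : ∀ {M : Matrix (Fin 2) (Fin 2) ℂ}, M.PosSemidef → (S⁻¹ * M * S⁻¹).PosSemidef :=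
    fun hM => by simpa only [hT] using hM.mul_mul_conjTranspose_same S⁻¹
  have hcancel : ∀ M : Matrix (Fin 2) (Fin 2) ℂ, S * (S⁻¹ * M * S⁻¹) * S = M := fun M => by
    simp only [← Matrix.mul_assoc, mul_nonsing_inv S hdet, Matrix.one_mul,
      Matrix.mul_assoc _ S⁻¹ S, nonsing_inv_mul S hdet, Matrix.mul_one]
  refine ⟨S⁻¹ * N * S⁻¹, 0, S⁻¹ * (rho0 q₁ q₂ ρ₁ ρ₂ - N) * S⁻¹,
    ⟨hconj hN, PosSemidef.zero, hconj hρN, ?_⟩, ?_, ?_⟩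
  · rw [add_zero, ← Matrix.add_mul, ← Matrix.mul_add, add_sub_cancel, ← hSS, ← Matrix.mul_assoc,
      nonsing_inv_mul S hdet, Matrix.one_mul, mul_nonsing_inv S hdet]
  · rw [PIof_eq_re_trace hSS, hcancel]
  · rw [Pcor, Matrix.mul_zero, trace_zero, Complex.zero_re, mul_zero, zero_add,
      re_trace_mul_eq_of_conj hbar₂, hcancel, Matrix.mul_sub, trace_sub, Complex.sub_re,
      re_trace_mul_rho0 hSS hbar₂ htr₂]

end Whitening

lemma posSemidef_rho0_sub_smul_vecMulVec {q₁ q₂ ρ11 ρ22 Q : ℝ}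
    {ρ₁ ρ₂ : Matrix (Fin 2) (Fin 2) ℂ} {ν₁ ν₂ : Fin 2 → ℂ} {ρ12 : ℂ}
    (hq : q₁ + q₂ = 1) (htr₁ : ρ₁.trace = 1) (htr₂ : ρ₂.trace = 1)
    (hρ0 : (rho0 q₁ q₂ ρ₁ ρ₂).PosDef) (hν₂ : star ν₂ ⬝ᵥ ν₂ = 1)
    (hres : vecMulVec ν₁ (star ν₁) + vecMulVec ν₂ (star ν₂) = 1)
    (h11 : (ρ11 : ℂ) = star ν₁ ⬝ᵥ (rho0 q₁ q₂ ρ₁ ρ₂ *ᵥ ν₁))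
    (h22 : (ρ22 : ℂ) = star ν₂ ⬝ᵥ (rho0 q₁ q₂ ρ₁ ρ₂ *ᵥ ν₂))
    (h12 : ρ12 = star ν₁ ⬝ᵥ (rho0 q₁ q₂ ρ₁ ρ₂ *ᵥ ν₂))
    (hQ : Q ≤ 1 - (ρ22 + ‖ρ12‖ ^ 2 / ρ22)) :
    (rho0 q₁ q₂ ρ₁ ρ₂ - (Q : ℂ) • vecMulVec ν₁ (star ν₁)).PosSemidef := by
  have hρ22 : 0 < ρ22 := by
    have hν₂0 : ν₂ ≠ 0 := by
      rintro rfl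
      simp at hν₂
    exact Complex.zero_lt_real.mp (h22 ▸ hρ0.dotProduct_mulVec_pos hν₂0)
  have hρ11 : ρ11 = 1 - ρ22 := by
    have h := trace_eq_add_of_resolution hres (rho0 q₁ q₂ ρ₁ ρ₂)
    rw [← h11, ← h22, rho0, trace_add, trace_smul, trace_smul, htr₁, htr₂] at h
    have h' := congrArg Complex.re h
    simp only [smul_eq_mul, mul_one, Complex.add_re, Complex.ofReal_re] at h'
    linarith
  refine posSemidef_sub_smul_vecMulVec hres hρ0.isHermitian h11 h22 h12 hρ22 ?_
  have h := mul_le_mul_of_nonneg_right hQ hρ22.le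
  rw [sub_mul, add_mul, div_mul_cancel₀ _ hρ22.ne'] at h
  rw [hρ11]
  linarith

theorem stmt9_general
    (q₁ q₂ : ℝ) (ρ₁ ρ₂ : Matrix (Fin 2) (Fin 2) ℂ)
    (hq : q₁ + q₂ = 1)
    (htr₁ : ρ₁.trace = 1)
    (htr₂ : ρ₂.trace = 1)
    (hρ0 : (rho0 q₁ q₂ ρ₁ ρ₂).PosDef)
    (S : Matrix (Fin 2) (Fin 2) ℂ) (hS : S.PosSemidef) (hSS : S * S = rho0 q₁ q₂ ρ₁ ρ₂)
    (ν₁ ν₂ : Fin 2 → ℂ)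
    (hν₁ : star ν₁ ⬝ᵥ ν₁ = 1) (hν₂ : star ν₂ ⬝ᵥ ν₂ = 1) (hν₁₂ : star ν₁ ⬝ᵥ ν₂ = 0)
    (C₁ C₂ : ℝ) (hCsum : 1 < C₁ + C₂)
    (hbar₁ : S * ((C₁ : ℂ) • vecMulVec ν₁ (star ν₁)
        + ((1 - C₂ : ℝ) : ℂ) • vecMulVec ν₂ (star ν₂)) * S = (q₁ : ℂ) • ρ₁)
    (hbar₂ : S * (((1 - C₁ : ℝ) : ℂ) • vecMulVec ν₁ (star ν₁)
        + (C₂ : ℂ) • vecMulVec ν₂ (star ν₂)) * S = (q₂ : ℂ) • ρ₂)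
    (ρ11 ρ22 : ℝ) (ρ12 : ℂ)
    (h11 : (ρ11 : ℂ) = star ν₁ ⬝ᵥ (rho0 q₁ q₂ ρ₁ ρ₂ *ᵥ ν₁))
    (h22 : (ρ22 : ℂ) = star ν₂ ⬝ᵥ (rho0 q₁ q₂ ρ₁ ρ₂ *ᵥ ν₂))
    (h12 : ρ12 = star ν₁ ⬝ᵥ (rho0 q₁ q₂ ρ₁ ρ₂ *ᵥ ν₂))
    (hC₁ : C₁ ≤ 1 / 2) (hC₂ : 1 / 2 < C₂) :
    ∀ Q ∈ Set.Icc (0 : ℝ) (1 - (ρ22 + ‖ρ12‖ ^ 2 / ρ22)),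
      PcorOpt Q q₁ q₂ ρ₁ ρ₂ = q₂ - (1 - C₁) * Q := by
  rintro Q ⟨hQ0, hQ⟩
  have hres := vecMulVec_add_vecMulVec_eq_one hν₁ hν₂ hν₁₂
  have hSu : IsUnit S := isUnit_of_isUnit_mul_self (hSS ▸ hρ0.isUnit)
  have h₂₁ := posSemidef_smul_add_smul_sub ν₁ ν₂ (a₁ := C₁) (a₂ := 1 - C₁) (b₁ := 1 - C₂)
    (b₂ := C₂) (by linarith) (by linarith)
  have h₂c : (((1 - C₁ : ℝ) : ℂ) • vecMulVec ν₁ (star ν₁) + (C₂ : ℂ) • vecMulVec ν₂ (star ν₂)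
      - ((1 - C₁ : ℝ) : ℂ) • 1).PosSemidef := by
    rw [← hres, smul_add]
    exact posSemidef_smul_add_smul_sub ν₁ ν₂ le_rfl (by linarith)
  have hN := posSemidef_rho0_sub_smul_vecMulVec hq htr₁ htr₂ hρ0 hν₂ hres h11 h22 h12 hQ
  obtain ⟨M₀, M₁, M₂, hM, hPI, hPcor⟩ := exists_isPOVM_of_posSemidef hS.1 hSu hSS hbar₂ htr₂
    ((posSemidef_vecMulVec_self_star ν₁).smul (Complex.zero_le_real.mpr hQ0)) hN
  refine IsGreatest.csSup_eq ⟨⟨M₀, M₁, M₂, hM, ?_, ?_⟩, ?_⟩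
  · rw [hPI, trace_smul, trace_vecMulVec, dotProduct_comm, hν₁]
    simp
  · rw [hPcor, mul_smul_comm, trace_smul, trace_smul_add_smul_mul_vecMulVec hν₁ hν₁₂]
    simp [mul_comm]
  · rintro _ ⟨A₀, A₁, A₂, hA, rfl, rfl⟩
    exact Pcor_le_of_posSemidef hS.1 hSS hbar₁ hbar₂ htr₂ h₂₁ h₂c hA

/-- If `C₁ ≤ 1/2 < C₂`, then for every `Q ∈ [0, 1−Q₂]`,
`P_cor^opt(Q) = q₂ − (1−C₁)Q`, i.e. `R_cor^opt(Q) = (1−C₁) + (C₁−q₁)/(1−Q)`. -/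
theorem stmt9
    (q₁ q₂ : ℝ) (ρ₁ ρ₂ : Matrix (Fin 2) (Fin 2) ℂ)
    (hq₁ : 0 < q₁) (hq₂ : 0 < q₂) (hq : q₁ + q₂ = 1)
    (hρ₁ : ρ₁.PosSemidef) (htr₁ : ρ₁.trace = 1)
    (hρ₂ : ρ₂.PosSemidef) (htr₂ : ρ₂.trace = 1)
    (hρ0 : (rho0 q₁ q₂ ρ₁ ρ₂).PosDef)
    (S : Matrix (Fin 2) (Fin 2) ℂ) (hS : S.PosSemidef) (hSS : S * S = rho0 q₁ q₂ ρ₁ ρ₂)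
    (ν₁ ν₂ : Fin 2 → ℂ)
    (hν₁ : star ν₁ ⬝ᵥ ν₁ = 1) (hν₂ : star ν₂ ⬝ᵥ ν₂ = 1) (hν₁₂ : star ν₁ ⬝ᵥ ν₂ = 0)
    (C₁ C₂ : ℝ) (hC12 : C₁ ≤ C₂) (hCsum : 1 < C₁ + C₂)
    (hbar₁ : S * ((C₁ : ℂ) • vecMulVec ν₁ (star ν₁)
        + ((1 - C₂ : ℝ) : ℂ) • vecMulVec ν₂ (star ν₂)) * S = (q₁ : ℂ) • ρ₁)
    (hbar₂ : S * (((1 - C₁ : ℝ) : ℂ) • vecMulVec ν₁ (star ν₁)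
        + (C₂ : ℂ) • vecMulVec ν₂ (star ν₂)) * S = (q₂ : ℂ) • ρ₂)
    (ρ11 ρ22 : ℝ) (ρ12 : ℂ)
    (h11 : (ρ11 : ℂ) = star ν₁ ⬝ᵥ (rho0 q₁ q₂ ρ₁ ρ₂ *ᵥ ν₁))
    (h22 : (ρ22 : ℂ) = star ν₂ ⬝ᵥ (rho0 q₁ q₂ ρ₁ ρ₂ *ᵥ ν₂))
    (h12 : ρ12 = star ν₁ ⬝ᵥ (rho0 q₁ q₂ ρ₁ ρ₂ *ᵥ ν₂))
    (hC₁ : C₁ ≤ 1 / 2) (hC₂ : 1 / 2 < C₂) :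
    ∀ Q ∈ Set.Icc (0 : ℝ) (1 - (ρ22 + ‖ρ12‖ ^ 2 / ρ22)),
      PcorOpt Q q₁ q₂ ρ₁ ρ₂ = q₂ - (1 - C₁) * Q :=
  stmt9_general q₁ q₂ ρ₁ ρ₂ hq htr₁ htr₂ hρ0 S hS hSS ν₁ ν₂ hν₁ hν₂ hν₁₂ C₁ C₂ hCsum hbar₁ hbar₂ ρ11
    ρ22 ρ12 h11 h22 h12 hC₁ hC₂

end FRIR
end
end

section
/- If 1/2 < C_1 ≤ C_2 and ρ_{12} = 0, then P̄_cor^opt(C_1) = ρ_{11}C_1 + ρ_{22}C_2, and P_I(C_1) = [0, ρ_{11}] when C_1 < C_2 while P_I(C_1) = [0, 1] when C_1 = C_2; consequently q_0^{(0)} = C_1. -/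
/-!
Since `ρ₁₂ = 0`, the eigenbasis `ν₁, ν₂` of `ρ̄₁` also diagonalises `ρ₀ = diag(ρ₁₁, ρ₂₂)`, hence its
square root `S`, hence `qᵢρᵢ = S ρ̄ᵢ S`. Only the diagonal entries of a POVM in this basis enter
`P̄_cor` and `P_I`, and every pair of probability vectors on the three outcomes comes from a
diagonal POVM, so the problem splits into two classical ones, weighted by `ρ₁₁` and `ρ₂₂`: on `ν₁`
the outcomes (inconclusive, 1, 2) pay `(q, C₁, 1 - C₁)`, on `ν₂` they pay `(q, 1 - C₂, C₂)`.
As `C₂ ≥ C₁ > 1/2` the optimum is `ρ₁₁ max(q, C₁) + ρ₂₂ max(q, C₂)`. At `q = C₁` the inconclusive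
outcome costs nothing on `ν₁` and, unless `C₁ = C₂`, strictly loses on `ν₂`.
-/

open Matrix ComplexOrder

noncomputable section

namespace FRIR

section General

variable {n : Type*}

def diagIn (ν₁ ν₂ : n → ℂ) (a b : ℝ) : Matrix n n ℂ :=
  (a : ℂ) • vecMulVec ν₁ (star ν₁) + (b : ℂ) • vecMulVec ν₂ (star ν₂)

lemma diagIn_add_diagIn {ν₁ ν₂ : n → ℂ} (a b c d : ℝ) :
    diagIn ν₁ ν₂ a b + diagIn ν₁ ν₂ c d = diagIn ν₁ ν₂ (a + c) (b + d) := by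
  simp only [diagIn, Complex.ofReal_add, add_smul]
  abel

variable [Fintype n]

lemma vecMulVec_mul_mul_vecMulVec {R : Type*} [CommRing R] (u v w x : n → R)
    (A : Matrix n n R) :
    vecMulVec u v * A * vecMulVec w x = (v ⬝ᵥ (A *ᵥ w)) • vecMulVec u x := by
  rw [vecMulVec_mul, vecMulVec_mul_vecMulVec, dotProduct_mulVec, vecMulVec_smul]

lemma trace_vecMulVec_star_mul (v : n → ℂ) (M : Matrix n n ℂ) :
    trace (vecMulVec v (star v) * M) = star v ⬝ᵥ (M *ᵥ v) := by
  rw [vecMulVec_mul, trace_vecMulVec, dotProduct_comm, dotProduct_mulVec]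

def diagEntry (v : n → ℂ) (M : Matrix n n ℂ) : ℝ :=
  (star v ⬝ᵥ (M *ᵥ v)).re

lemma diagEntry_add (v : n → ℂ) (M N : Matrix n n ℂ) :
    diagEntry v (M + N) = diagEntry v M + diagEntry v N := by
  simp [diagEntry, add_mulVec]

lemma diagEntry_nonneg {M : Matrix n n ℂ} (hM : M.PosSemidef) (v : n → ℂ) :
    0 ≤ diagEntry v M :=
  (Complex.le_def.mp (hM.dotProduct_mulVec_nonneg v)).1

lemma re_trace_ofReal_smul_mul (c : ℝ) (A M : Matrix n n ℂ) :
    (trace ((c : ℂ) • A * M)).re = c * (trace (A * M)).re := by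
  simp

lemma pos_of_posDef_of_eq {A : Matrix n n ℂ} (hA : A.PosDef)
    {v : n → ℂ} (hv : star v ⬝ᵥ v = 1) {a : ℝ} (ha : (a : ℂ) = star v ⬝ᵥ (A *ᵥ v)) : 0 < a := by
  have hv₀ : v ≠ 0 := by
    rintro rfl
    simp at hv
  have := hA.dotProduct_mulVec_pos hv₀
  rwa [← ha, Complex.zero_lt_real] at this

variable {ν₁ ν₂ : n → ℂ}

lemma posSemidef_diagIn {a b : ℝ} (ha : 0 ≤ a) (hb : 0 ≤ b) : (diagIn ν₁ ν₂ a b).PosSemidef :=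
  ((posSemidef_vecMulVec_self_star ν₁).smul (Complex.zero_le_real.2 ha)).add
    ((posSemidef_vecMulVec_self_star ν₂).smul (Complex.zero_le_real.2 hb))

lemma re_trace_diagIn_mul (a b : ℝ) (M : Matrix n n ℂ) :
    (trace (diagIn ν₁ ν₂ a b * M)).re = a * diagEntry ν₁ M + b * diagEntry ν₂ M := by
  simp [diagIn, add_mul, trace_vecMulVec_star_mul, diagEntry]

lemma trace_diagIn (hν₁ : star ν₁ ⬝ᵥ ν₁ = 1) (hν₂ : star ν₂ ⬝ᵥ ν₂ = 1) (a b : ℝ) :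
    trace (diagIn ν₁ ν₂ a b) = a + b := by
  simp [diagIn, dotProduct_comm ν₁, dotProduct_comm ν₂, hν₁, hν₂]

lemma diagIn_mul_diagIn (hν₁ : star ν₁ ⬝ᵥ ν₁ = 1) (hν₂ : star ν₂ ⬝ᵥ ν₂ = 1)
    (hν₁₂ : star ν₁ ⬝ᵥ ν₂ = 0) (a b c d : ℝ) :
    diagIn ν₁ ν₂ a b * diagIn ν₁ ν₂ c d = diagIn ν₁ ν₂ (a * c) (b * d) := by
  have hν₂₁ : star ν₂ ⬝ᵥ ν₁ = 0 := by rw [star_dotProduct, hν₁₂, star_zero]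
  simp only [diagIn, add_mul, mul_add, smul_mul_smul_comm, vecMulVec_mul_vecMulVec, hν₁, hν₂,
    hν₁₂, hν₂₁, one_smul, zero_smul, vecMulVec_zero, smul_zero, add_zero, zero_add,
    Complex.ofReal_mul]

lemma diagEntry_diagIn_left (hν₁ : star ν₁ ⬝ᵥ ν₁ = 1) (hν₁₂ : star ν₁ ⬝ᵥ ν₂ = 0)
    (a b : ℝ) : diagEntry ν₁ (diagIn ν₁ ν₂ a b) = a := by
  simp only [diagEntry, diagIn, add_mulVec, smul_mulVec, vecMulVec_mulVec, hν₁, hν₁₂,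
    dotProduct_add, dotProduct_smul]
  simp

lemma diagEntry_diagIn_right (hν₂ : star ν₂ ⬝ᵥ ν₂ = 1) (hν₁₂ : star ν₁ ⬝ᵥ ν₂ = 0)
    (a b : ℝ) : diagEntry ν₂ (diagIn ν₁ ν₂ a b) = b := by
  have hν₂₁ : star ν₂ ⬝ᵥ ν₁ = 0 := by rw [star_dotProduct, hν₁₂, star_zero]
  simp only [diagEntry, diagIn, add_mulVec, smul_mulVec, vecMulVec_mulVec, hν₂, hν₂₁,
    dotProduct_add, dotProduct_smul]
  simp

lemma diagIn_sqrt_mul_diagIn_mul_diagIn_sqrt (hν₁ : star ν₁ ⬝ᵥ ν₁ = 1)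
    (hν₂ : star ν₂ ⬝ᵥ ν₂ = 1) (hν₁₂ : star ν₁ ⬝ᵥ ν₂ = 0)
    {a b : ℝ} (ha : 0 ≤ a) (hb : 0 ≤ b) (c d : ℝ) :
    diagIn ν₁ ν₂ √a √b * diagIn ν₁ ν₂ c d * diagIn ν₁ ν₂ √a √b = diagIn ν₁ ν₂ (c * a) (d * b) := by
  rw [diagIn_mul_diagIn hν₁ hν₂ hν₁₂, diagIn_mul_diagIn hν₁ hν₂ hν₁₂, mul_right_comm √a,
    Real.mul_self_sqrt ha, mul_right_comm √b, Real.mul_self_sqrt hb, mul_comm a, mul_comm b]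

lemma eq_diagIn_sqrt_of_mul_self_eq [DecidableEq n] (hν₁ : star ν₁ ⬝ᵥ ν₁ = 1)
    (hν₂ : star ν₂ ⬝ᵥ ν₂ = 1) (hν₁₂ : star ν₁ ⬝ᵥ ν₂ = 0)
    {S : Matrix n n ℂ} (hS : S.PosSemidef) {a b : ℝ} (ha : 0 ≤ a) (hb : 0 ≤ b)
    (hSS : S * S = diagIn ν₁ ν₂ a b) : S = diagIn ν₁ ν₂ √a √b := by
  open scoped MatrixOrder Matrix.Norms.L2Operator in
  refine (CFC.sq_eq_sq_iff S _ hS.nonneg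
    (posSemidef_diagIn (Real.sqrt_nonneg a) (Real.sqrt_nonneg b)).nonneg).mp ?_
  rw [sq, sq, hSS, diagIn_mul_diagIn hν₁ hν₂ hν₁₂, Real.mul_self_sqrt ha, Real.mul_self_sqrt hb]

end General

section Qubit

variable {ν₁ ν₂ : Fin 2 → ℂ}

lemma diagIn_one_one (hν₁ : star ν₁ ⬝ᵥ ν₁ = 1) (hν₂ : star ν₂ ⬝ᵥ ν₂ = 1)
    (hν₁₂ : star ν₁ ⬝ᵥ ν₂ = 0) : diagIn ν₁ ν₂ 1 1 = 1 := by
  have hν₂₁ : star ν₂ ⬝ᵥ ν₁ = 0 := by rw [star_dotProduct, hν₁₂, star_zero]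
  let U : Matrix (Fin 2) (Fin 2) ℂ := (of ![ν₁, ν₂])ᵀ
  have hU : Uᴴ * U = 1 := by
    ext k l
    have hkl : (Uᴴ * U) k l = star (![ν₁, ν₂] k) ⬝ᵥ ![ν₁, ν₂] l := by
      simp [U, mul_apply, dotProduct]
    rw [hkl]
    fin_cases k <;> fin_cases l <;> simp [hν₁, hν₂, hν₁₂, hν₂₁]
  rw [← mul_eq_one_comm.mp hU]
  ext i j
  simp [U, diagIn, mul_apply, vecMulVec_apply, Fin.sum_univ_two]

lemma eq_diagIn_of_isHermitian (hν₁ : star ν₁ ⬝ᵥ ν₁ = 1) (hν₂ : star ν₂ ⬝ᵥ ν₂ = 1)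
    (hν₁₂ : star ν₁ ⬝ᵥ ν₂ = 0) {A : Matrix (Fin 2) (Fin 2) ℂ} (hA : A.IsHermitian) {a b : ℝ}
    (ha : (a : ℂ) = star ν₁ ⬝ᵥ (A *ᵥ ν₁)) (hb : (b : ℂ) = star ν₂ ⬝ᵥ (A *ᵥ ν₂))
    (h₁₂ : star ν₁ ⬝ᵥ (A *ᵥ ν₂) = 0) : A = diagIn ν₁ ν₂ a b := by
  have h₂₁ : star ν₂ ⬝ᵥ (A *ᵥ ν₁) = 0 := by
    rw [← star_star (star ν₂ ⬝ᵥ _), star_dotProduct, star_mulVec, star_star, hA.eq,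
      ← dotProduct_mulVec, h₁₂, star_zero]
  calc A = diagIn ν₁ ν₂ 1 1 * A * diagIn ν₁ ν₂ 1 1 := by
        rw [diagIn_one_one hν₁ hν₂ hν₁₂, one_mul, mul_one]
    _ = diagIn ν₁ ν₂ a b := by
        simp only [diagIn, Complex.ofReal_one, one_smul, add_mul, mul_add,
          vecMulVec_mul_mul_vecMulVec, ← ha, ← hb, h₁₂, h₂₁, zero_smul, add_zero, zero_add]

end Qubit

section Classical

lemma mem_stdSimplex_fin_three {a : Fin 3 → ℝ} :
    a ∈ stdSimplex ℝ (Fin 3) ↔ 0 ≤ a 0 ∧ 0 ≤ a 1 ∧ 0 ≤ a 2 ∧ a 0 + a 1 + a 2 = 1 := by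
  simp [stdSimplex, Fin.forall_fin_succ, Fin.sum_univ_three, and_assoc]

lemma mul_add_mul_one_sub_le_max {q c t : ℝ} (ht₀ : 0 ≤ t) (ht₁ : t ≤ 1) :
    q * t + c * (1 - t) ≤ max q c := by
  nlinarith [le_max_left q c, le_max_right q c]

/-- `P̄_cor` in the eigenbasis `ν₁, ν₂`: `a` and `b` are the outcome distributions of the POVM
on `ν₁` and `ν₂` (outcome `0` inconclusive), and `rᵢ = ρᵢᵢ`. -/
def diagPbarCor (q C₁ C₂ r₁ r₂ : ℝ) (a b : Fin 3 → ℝ) : ℝ :=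
  r₁ * (q * a 0 + C₁ * a 1 + (1 - C₁) * a 2) + r₂ * (q * b 0 + (1 - C₂) * b 1 + C₂ * b 2)

def diagPIset (q C₁ C₂ r₁ r₂ : ℝ) : Set ℝ :=
  {Q | ∃ a ∈ stdSimplex ℝ (Fin 3), ∃ b ∈ stdSimplex ℝ (Fin 3),
    diagPbarCor q C₁ C₂ r₁ r₂ a b = r₁ * max q C₁ + r₂ * max q C₂ ∧ r₁ * a 0 + r₂ * b 0 = Q}

variable {q C₁ C₂ r₁ r₂ : ℝ} {a b : Fin 3 → ℝ}

/-- Guessing the less likely state never pays once `1/2 ≤ Cᵢ`. -/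
lemma diagPbarCor_le (hr₁ : 0 ≤ r₁) (hr₂ : 0 ≤ r₂) (hC₁ : 1 / 2 ≤ C₁) (hC₂ : 1 / 2 ≤ C₂)
    (ha : a ∈ stdSimplex ℝ (Fin 3)) (hb : b ∈ stdSimplex ℝ (Fin 3)) :
    diagPbarCor q C₁ C₂ r₁ r₂ a b ≤
      r₁ * (q * a 0 + C₁ * (1 - a 0)) + r₂ * (q * b 0 + C₂ * (1 - b 0)) := by
  rw [mem_stdSimplex_fin_three] at ha hb
  have h₁ : C₁ * a 1 + (1 - C₁) * a 2 ≤ C₁ * (1 - a 0) := by nlinarith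
  have h₂ : (1 - C₂) * b 1 + C₂ * b 2 ≤ C₂ * (1 - b 0) := by nlinarith
  unfold diagPbarCor
  nlinarith

lemma isGreatest_diagPbarCor (hr₁ : 0 ≤ r₁) (hr₂ : 0 ≤ r₂) (hC₁ : 1 / 2 ≤ C₁)
    (hC₁₂ : C₁ ≤ C₂) :
    IsGreatest {x | ∃ a ∈ stdSimplex ℝ (Fin 3), ∃ b ∈ stdSimplex ℝ (Fin 3),
      diagPbarCor q C₁ C₂ r₁ r₂ a b = x} (r₁ * max q C₁ + r₂ * max q C₂) := by
  refine ⟨?_, ?_⟩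
  · rcases le_total q C₁ with h₁ | h₁
    · refine ⟨![0, 1, 0], by simp [mem_stdSimplex_fin_three], ![0, 0, 1],
        by simp [mem_stdSimplex_fin_three], ?_⟩
      simp [diagPbarCor, max_eq_right h₁, max_eq_right (h₁.trans hC₁₂)]
    rcases le_total q C₂ with h₂ | h₂
    · refine ⟨![1, 0, 0], by simp [mem_stdSimplex_fin_three], ![0, 0, 1],
        by simp [mem_stdSimplex_fin_three], ?_⟩
      simp [diagPbarCor, max_eq_left h₁, max_eq_right h₂]
    · refine ⟨![1, 0, 0], by simp [mem_stdSimplex_fin_three], ![1, 0, 0],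
        by simp [mem_stdSimplex_fin_three], ?_⟩
      simp [diagPbarCor, max_eq_left h₁, max_eq_left h₂]
  · rintro x ⟨a, ha, b, hb, rfl⟩
    have ha₀ := mem_Icc_of_mem_stdSimplex ha 0
    have hb₀ := mem_Icc_of_mem_stdSimplex hb 0
    calc diagPbarCor q C₁ C₂ r₁ r₂ a b
        ≤ r₁ * (q * a 0 + C₁ * (1 - a 0)) + r₂ * (q * b 0 + C₂ * (1 - b 0)) :=
          diagPbarCor_le hr₁ hr₂ hC₁ (hC₁.trans hC₁₂) ha hb
      _ ≤ r₁ * max q C₁ + r₂ * max q C₂ := by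
          gcongr
          · exact mul_add_mul_one_sub_le_max ha₀.1 ha₀.2
          · exact mul_add_mul_one_sub_le_max hb₀.1 hb₀.2

lemma diagPIset_of_lt (hr₁ : 0 < r₁) (hr₂ : 0 < r₂) (hC₁ : 1 / 2 ≤ C₁) (hC₁₂ : C₁ < C₂) :
    diagPIset C₁ C₁ C₂ r₁ r₂ = Set.Icc 0 r₁ := by
  ext Q
  constructor
  · rintro ⟨a, ha, b, hb, hopt, rfl⟩
    rw [max_self, max_eq_right hC₁₂.le] at hopt
    have hle := diagPbarCor_le (q := C₁) hr₁.le hr₂.le hC₁ (hC₁.trans hC₁₂.le) ha hb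
    have ha₀ := mem_Icc_of_mem_stdSimplex ha 0
    have hb₀ := mem_Icc_of_mem_stdSimplex hb 0
    have hb₀' : b 0 = 0 := by nlinarith [mul_pos hr₂ (sub_pos.2 hC₁₂), hb₀.1]
    rw [hb₀', mul_zero, add_zero]
    exact ⟨mul_nonneg hr₁.le ha₀.1, mul_le_of_le_one_right hr₁.le ha₀.2⟩
  · rintro ⟨hQ₀, hQ₁⟩
    have ht₀ : 0 ≤ Q / r₁ := div_nonneg hQ₀ hr₁.le
    have ht₁ : Q / r₁ ≤ 1 := (div_le_one hr₁).2 hQ₁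
    refine ⟨![Q / r₁, 1 - Q / r₁, 0], ?_, ![0, 0, 1], by simp [mem_stdSimplex_fin_three], ?_, ?_⟩
    · simp [mem_stdSimplex_fin_three, ht₀, ht₁]
    · simp only [diagPbarCor, max_self, max_eq_right hC₁₂.le, Matrix.cons_val]
      field_simp
      ring
    · simp only [Matrix.cons_val, mul_zero, add_zero]
      exact mul_div_cancel₀ Q hr₁.ne'

lemma diagPIset_self {C : ℝ} (hr₁ : 0 ≤ r₁) (hr₂ : 0 ≤ r₂) (hr : r₁ + r₂ = 1) :
    diagPIset C C C r₁ r₂ = Set.Icc 0 1 := by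
  ext Q
  constructor
  · rintro ⟨a, ha, b, hb, -, rfl⟩
    have ha₀ := mem_Icc_of_mem_stdSimplex ha 0
    have hb₀ := mem_Icc_of_mem_stdSimplex hb 0
    constructor <;> nlinarith [ha₀.1, ha₀.2, hb₀.1, hb₀.2]
  · rintro ⟨hQ₀, hQ₁⟩
    refine ⟨![Q, 1 - Q, 0], ?_, ![Q, 0, 1 - Q], ?_, ?_, ?_⟩
    · simp [mem_stdSimplex_fin_three, hQ₀, hQ₁]
    · simp [mem_stdSimplex_fin_three, hQ₀, hQ₁]
    · simp only [diagPbarCor, max_self, Matrix.cons_val]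
      ring
    · simp only [Matrix.cons_val]
      linear_combination Q * hr

lemma zero_mem_diagPIset_iff (hr₁ : 0 < r₁) (hr₂ : 0 < r₂) (hC₁ : 1 / 2 ≤ C₁) (hC₁₂ : C₁ ≤ C₂) :
    0 ∈ diagPIset q C₁ C₂ r₁ r₂ ↔ q ≤ C₁ := by
  constructor
  · rintro ⟨a, ha, b, hb, hopt, hQ⟩
    have ha₀ : a 0 = 0 := by nlinarith [ha.1 0, hb.1 0]
    have hb₀ : b 0 = 0 := by nlinarith [ha.1 0, hb.1 0]
    have hle := diagPbarCor_le (q := q) hr₁.le hr₂.le hC₁ (hC₁.trans hC₁₂) ha hb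
    rw [hopt, ha₀, hb₀] at hle
    have hmax : max q C₁ ≤ C₁ := by nlinarith [le_max_right q C₂]
    exact (le_max_left q C₁).trans hmax
  · intro hq
    refine ⟨![0, 1, 0], by simp [mem_stdSimplex_fin_three], ![0, 0, 1],
      by simp [mem_stdSimplex_fin_three], ?_, by simp⟩
    simp [diagPbarCor, max_eq_right hq, max_eq_right (hq.trans hC₁₂)]

end Classical

lemma IsPOVM.mem_stdSimplex {M₀ M₁ M₂ : Matrix (Fin 2) (Fin 2) ℂ} (h : IsPOVM M₀ M₁ M₂)
    {v : Fin 2 → ℂ} (hv : star v ⬝ᵥ v = 1) :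
    ![diagEntry v M₀, diagEntry v M₁, diagEntry v M₂] ∈ stdSimplex ℝ (Fin 3) := by
  obtain ⟨h₀, h₁, h₂, hsum⟩ := h
  refine mem_stdSimplex_fin_three.2
    ⟨diagEntry_nonneg h₀ v, diagEntry_nonneg h₁ v, diagEntry_nonneg h₂ v, ?_⟩
  simp only [Matrix.cons_val, ← diagEntry_add, hsum]
  simp [diagEntry, hv]

lemma isPOVM_diagIn {ν₁ ν₂ : Fin 2 → ℂ} (hν₁ : star ν₁ ⬝ᵥ ν₁ = 1) (hν₂ : star ν₂ ⬝ᵥ ν₂ = 1)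
    (hν₁₂ : star ν₁ ⬝ᵥ ν₂ = 0) {a b : Fin 3 → ℝ} (ha : a ∈ stdSimplex ℝ (Fin 3))
    (hb : b ∈ stdSimplex ℝ (Fin 3)) :
    IsPOVM (diagIn ν₁ ν₂ (a 0) (b 0)) (diagIn ν₁ ν₂ (a 1) (b 1)) (diagIn ν₁ ν₂ (a 2) (b 2)) := by
  obtain ⟨ha₀, ha₁, ha₂, ha⟩ := mem_stdSimplex_fin_three.1 ha
  obtain ⟨hb₀, hb₁, hb₂, hb⟩ := mem_stdSimplex_fin_three.1 hb
  refine ⟨posSemidef_diagIn ha₀ hb₀, posSemidef_diagIn ha₁ hb₁, posSemidef_diagIn ha₂ hb₂, ?_⟩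
  rw [diagIn_add_diagIn, diagIn_add_diagIn, ha, hb, diagIn_one_one hν₁ hν₂ hν₁₂]

/-- The hypotheses of the theorem written in the eigenbasis `ν₁, ν₂` of `ρ̄₁`, where
`rᵢ = ρᵢᵢ` are the diagonal entries of `ρ₀`. -/
structure DiagonalForm (q₁ q₂ : ℝ) (ρ₁ ρ₂ : Matrix (Fin 2) (Fin 2) ℂ) (ν₁ ν₂ : Fin 2 → ℂ)
    (C₁ C₂ r₁ r₂ : ℝ) : Prop where
  norm_ν₁ : star ν₁ ⬝ᵥ ν₁ = 1
  norm_ν₂ : star ν₂ ⬝ᵥ ν₂ = 1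
  orthogonal : star ν₁ ⬝ᵥ ν₂ = 0
  smul_ρ₁ : (q₁ : ℂ) • ρ₁ = diagIn ν₁ ν₂ (C₁ * r₁) ((1 - C₂) * r₂)
  smul_ρ₂ : (q₂ : ℂ) • ρ₂ = diagIn ν₁ ν₂ ((1 - C₁) * r₁) (C₂ * r₂)

namespace DiagonalForm

variable {q₁ q₂ C₁ C₂ r₁ r₂ : ℝ} {ρ₁ ρ₂ : Matrix (Fin 2) (Fin 2) ℂ} {ν₁ ν₂ : Fin 2 → ℂ}

lemma of_conj_sqrt (hν₁ : star ν₁ ⬝ᵥ ν₁ = 1) (hν₂ : star ν₂ ⬝ᵥ ν₂ = 1)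
    (hν₁₂ : star ν₁ ⬝ᵥ ν₂ = 0) (hr₁ : 0 ≤ r₁) (hr₂ : 0 ≤ r₂) {S : Matrix (Fin 2) (Fin 2) ℂ}
    (hS : S = diagIn ν₁ ν₂ √r₁ √r₂) (hbar₁ : S * diagIn ν₁ ν₂ C₁ (1 - C₂) * S = (q₁ : ℂ) • ρ₁)
    (hbar₂ : S * diagIn ν₁ ν₂ (1 - C₁) C₂ * S = (q₂ : ℂ) • ρ₂) :
    DiagonalForm q₁ q₂ ρ₁ ρ₂ ν₁ ν₂ C₁ C₂ r₁ r₂ := by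
  subst hS
  refine ⟨hν₁, hν₂, hν₁₂, ?_, ?_⟩
  · rw [← hbar₁, diagIn_sqrt_mul_diagIn_mul_diagIn_sqrt hν₁ hν₂ hν₁₂ hr₁ hr₂]
  · rw [← hbar₂, diagIn_sqrt_mul_diagIn_mul_diagIn_sqrt hν₁ hν₂ hν₁₂ hr₁ hr₂]

lemma rho0_eq (h : DiagonalForm q₁ q₂ ρ₁ ρ₂ ν₁ ν₂ C₁ C₂ r₁ r₂) :
    rho0 q₁ q₂ ρ₁ ρ₂ = diagIn ν₁ ν₂ r₁ r₂ := by
  rw [rho0, h.smul_ρ₁, h.smul_ρ₂, diagIn_add_diagIn]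
  congr 1 <;> ring

lemma pIof_eq (h : DiagonalForm q₁ q₂ ρ₁ ρ₂ ν₁ ν₂ C₁ C₂ r₁ r₂) (M₀ : Matrix (Fin 2) (Fin 2) ℂ) :
    PIof q₁ q₂ ρ₁ ρ₂ M₀ = r₁ * diagEntry ν₁ M₀ + r₂ * diagEntry ν₂ M₀ := by
  rw [PIof, h.rho0_eq, re_trace_diagIn_mul]

lemma pbarCor_eq (h : DiagonalForm q₁ q₂ ρ₁ ρ₂ ν₁ ν₂ C₁ C₂ r₁ r₂) (q : ℝ)
    (M₀ M₁ M₂ : Matrix (Fin 2) (Fin 2) ℂ) :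
    PbarCor q q₁ q₂ ρ₁ ρ₂ M₀ M₁ M₂ = diagPbarCor q C₁ C₂ r₁ r₂
      ![diagEntry ν₁ M₀, diagEntry ν₁ M₁, diagEntry ν₁ M₂]
      ![diagEntry ν₂ M₀, diagEntry ν₂ M₁, diagEntry ν₂ M₂] := by
  rw [PbarCor, Pcor, h.pIof_eq, ← re_trace_ofReal_smul_mul, ← re_trace_ofReal_smul_mul,
    h.smul_ρ₁, h.smul_ρ₂, re_trace_diagIn_mul, re_trace_diagIn_mul]
  simp only [diagPbarCor, Matrix.cons_val]
  ring

lemma exists_isPOVM_iff (h : DiagonalForm q₁ q₂ ρ₁ ρ₂ ν₁ ν₂ C₁ C₂ r₁ r₂) (q : ℝ)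
    (P : ℝ → ℝ → Prop) :
    (∃ M₀ M₁ M₂, IsPOVM M₀ M₁ M₂ ∧ P (PbarCor q q₁ q₂ ρ₁ ρ₂ M₀ M₁ M₂) (PIof q₁ q₂ ρ₁ ρ₂ M₀)) ↔
      ∃ a ∈ stdSimplex ℝ (Fin 3), ∃ b ∈ stdSimplex ℝ (Fin 3),
        P (diagPbarCor q C₁ C₂ r₁ r₂ a b) (r₁ * a 0 + r₂ * b 0) := by
  constructor
  · rintro ⟨M₀, M₁, M₂, hM, hP⟩
    rw [h.pbarCor_eq, h.pIof_eq] at hP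
    exact ⟨_, hM.mem_stdSimplex h.norm_ν₁, _, hM.mem_stdSimplex h.norm_ν₂, hP⟩
  · rintro ⟨a, ha, b, hb, hP⟩
    refine ⟨_, _, _, isPOVM_diagIn h.norm_ν₁ h.norm_ν₂ h.orthogonal ha hb, ?_⟩
    have hdiag (c : Fin 3 → ℝ) : ![c 0, c 1, c 2] = c := by
      ext k
      fin_cases k <;> rfl
    rw [h.pbarCor_eq, h.pIof_eq]
    simp only [diagEntry_diagIn_left h.norm_ν₁ h.orthogonal,
      diagEntry_diagIn_right h.norm_ν₂ h.orthogonal, hdiag]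
    exact hP

lemma pbarOpt_eq (h : DiagonalForm q₁ q₂ ρ₁ ρ₂ ν₁ ν₂ C₁ C₂ r₁ r₂)
    (hr₁ : 0 ≤ r₁) (hr₂ : 0 ≤ r₂) (hC₁ : 1 / 2 ≤ C₁) (hC₁₂ : C₁ ≤ C₂) (q : ℝ) :
    PbarOpt q q₁ q₂ ρ₁ ρ₂ = r₁ * max q C₁ + r₂ * max q C₂ := by
  have hset : {x | ∃ M₀ M₁ M₂, IsPOVM M₀ M₁ M₂ ∧ PbarCor q q₁ q₂ ρ₁ ρ₂ M₀ M₁ M₂ = x} =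
      {x | ∃ a ∈ stdSimplex ℝ (Fin 3), ∃ b ∈ stdSimplex ℝ (Fin 3),
        diagPbarCor q C₁ C₂ r₁ r₂ a b = x} := by
    ext x
    exact h.exists_isPOVM_iff q fun y _ => y = x
  rw [PbarOpt, hset, (isGreatest_diagPbarCor hr₁ hr₂ hC₁ hC₁₂).csSup_eq]

lemma pIset_eq (h : DiagonalForm q₁ q₂ ρ₁ ρ₂ ν₁ ν₂ C₁ C₂ r₁ r₂)
    (hr₁ : 0 ≤ r₁) (hr₂ : 0 ≤ r₂) (hC₁ : 1 / 2 ≤ C₁) (hC₁₂ : C₁ ≤ C₂) (q : ℝ) :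
    PIset q q₁ q₂ ρ₁ ρ₂ = diagPIset q C₁ C₂ r₁ r₂ := by
  ext Q
  rw [PIset, Set.mem_ofPred_eq, h.pbarOpt_eq hr₁ hr₂ hC₁ hC₁₂]
  exact h.exists_isPOVM_iff q fun y Q' => y = r₁ * max q C₁ + r₂ * max q C₂ ∧ Q' = Q

end DiagonalForm

theorem stmt10_general
    (q₁ q₂ : ℝ) (ρ₁ ρ₂ : Matrix (Fin 2) (Fin 2) ℂ)
    (hq : q₁ + q₂ = 1)
    (htr₁ : ρ₁.trace = 1)
    (htr₂ : ρ₂.trace = 1)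
    (hρ0 : (rho0 q₁ q₂ ρ₁ ρ₂).PosDef)
    (S : Matrix (Fin 2) (Fin 2) ℂ) (hS : S.PosSemidef) (hSS : S * S = rho0 q₁ q₂ ρ₁ ρ₂)
    (ν₁ ν₂ : Fin 2 → ℂ)
    (hν₁ : star ν₁ ⬝ᵥ ν₁ = 1) (hν₂ : star ν₂ ⬝ᵥ ν₂ = 1) (hν₁₂ : star ν₁ ⬝ᵥ ν₂ = 0)
    (C₁ C₂ : ℝ) (hC12 : C₁ ≤ C₂)
    (hbar₁ : S * ((C₁ : ℂ) • vecMulVec ν₁ (star ν₁)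
        + ((1 - C₂ : ℝ) : ℂ) • vecMulVec ν₂ (star ν₂)) * S = (q₁ : ℂ) • ρ₁)
    (hbar₂ : S * (((1 - C₁ : ℝ) : ℂ) • vecMulVec ν₁ (star ν₁)
        + (C₂ : ℂ) • vecMulVec ν₂ (star ν₂)) * S = (q₂ : ℂ) • ρ₂)
    (ρ11 ρ22 : ℝ) (ρ12 : ℂ)
    (h11 : (ρ11 : ℂ) = star ν₁ ⬝ᵥ (rho0 q₁ q₂ ρ₁ ρ₂ *ᵥ ν₁))
    (h22 : (ρ22 : ℂ) = star ν₂ ⬝ᵥ (rho0 q₁ q₂ ρ₁ ρ₂ *ᵥ ν₂))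
    (h12 : ρ12 = star ν₁ ⬝ᵥ (rho0 q₁ q₂ ρ₁ ρ₂ *ᵥ ν₂))
    (hC₁ : 1 / 2 < C₁) (h12z : ρ12 = 0) :
    PbarOpt C₁ q₁ q₂ ρ₁ ρ₂ = ρ11 * C₁ + ρ22 * C₂ ∧
      (C₁ < C₂ → PIset C₁ q₁ q₂ ρ₁ ρ₂ = Set.Icc 0 ρ11) ∧
      (C₁ = C₂ → PIset C₁ q₁ q₂ ρ₁ ρ₂ = Set.Icc 0 1) ∧
      q0low q₁ q₂ ρ₁ ρ₂ = C₁ := by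
  have hρ0_eq : rho0 q₁ q₂ ρ₁ ρ₂ = diagIn ν₁ ν₂ ρ11 ρ22 :=
    eq_diagIn_of_isHermitian hν₁ hν₂ hν₁₂ hρ0.1 h11 h22 (h12 ▸ h12z)
  have hr₁ : 0 < ρ11 := pos_of_posDef_of_eq hρ0 hν₁ h11
  have hr₂ : 0 < ρ22 := pos_of_posDef_of_eq hρ0 hν₂ h22
  have hr : ρ11 + ρ22 = 1 := by
    have htr : trace (rho0 q₁ q₂ ρ₁ ρ₂) = 1 := by
      simp [rho0, htr₁, htr₂, ← Complex.ofReal_add, hq]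
    rw [hρ0_eq, trace_diagIn hν₁ hν₂] at htr
    exact_mod_cast htr
  have hS_eq : S = diagIn ν₁ ν₂ √ρ11 √ρ22 :=
    eq_diagIn_sqrt_of_mul_self_eq hν₁ hν₂ hν₁₂ hS hr₁.le hr₂.le (hSS.trans hρ0_eq)
  have h : DiagonalForm q₁ q₂ ρ₁ ρ₂ ν₁ ν₂ C₁ C₂ ρ11 ρ22 :=
    .of_conj_sqrt hν₁ hν₂ hν₁₂ hr₁.le hr₂.le hS_eq hbar₁ hbar₂
  have hPI := h.pIset_eq hr₁.le hr₂.le hC₁.le hC12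
  refine ⟨?_, fun hlt => ?_, fun heq => ?_, ?_⟩
  · rw [h.pbarOpt_eq hr₁.le hr₂.le hC₁.le hC12, max_self, max_eq_right hC12]
  · rw [hPI]
    exact diagPIset_of_lt hr₁ hr₂ hC₁.le hlt
  · rw [hPI, heq]
    exact diagPIset_self hr₁.le hr₂.le hr
  · have hset : {q | 0 < q ∧ (0 : ℝ) ∈ PIset q q₁ q₂ ρ₁ ρ₂} = Set.Ioc 0 C₁ := by
      ext q
      rw [Set.mem_Ioc, ← zero_mem_diagPIset_iff hr₁ hr₂ hC₁.le hC12, ← hPI]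
      rfl
    rw [q0low, hset, csSup_Ioc (by linarith)]

/-- If `1/2 < C₁ ≤ C₂` and `ρ₁₂ = 0`, then
`P̄_cor^opt(C₁) = ρ₁₁C₁ + ρ₂₂C₂`, `P_I(C₁) = [0,ρ₁₁]` when `C₁ < C₂`,
`P_I(C₁) = [0,1]` when `C₁ = C₂`; consequently `q₀⁽⁰⁾ = C₁`. -/
theorem stmt10
    (q₁ q₂ : ℝ) (ρ₁ ρ₂ : Matrix (Fin 2) (Fin 2) ℂ)
    (hq₁ : 0 < q₁) (hq₂ : 0 < q₂) (hq : q₁ + q₂ = 1)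
    (hρ₁ : ρ₁.PosSemidef) (htr₁ : ρ₁.trace = 1)
    (hρ₂ : ρ₂.PosSemidef) (htr₂ : ρ₂.trace = 1)
    (hρ0 : (rho0 q₁ q₂ ρ₁ ρ₂).PosDef)
    (S : Matrix (Fin 2) (Fin 2) ℂ) (hS : S.PosSemidef) (hSS : S * S = rho0 q₁ q₂ ρ₁ ρ₂)
    (ν₁ ν₂ : Fin 2 → ℂ)
    (hν₁ : star ν₁ ⬝ᵥ ν₁ = 1) (hν₂ : star ν₂ ⬝ᵥ ν₂ = 1) (hν₁₂ : star ν₁ ⬝ᵥ ν₂ = 0)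
    (C₁ C₂ : ℝ) (hC12 : C₁ ≤ C₂) (hCsum : 1 < C₁ + C₂)
    (hbar₁ : S * ((C₁ : ℂ) • vecMulVec ν₁ (star ν₁)
        + ((1 - C₂ : ℝ) : ℂ) • vecMulVec ν₂ (star ν₂)) * S = (q₁ : ℂ) • ρ₁)
    (hbar₂ : S * (((1 - C₁ : ℝ) : ℂ) • vecMulVec ν₁ (star ν₁)
        + (C₂ : ℂ) • vecMulVec ν₂ (star ν₂)) * S = (q₂ : ℂ) • ρ₂)
    (ρ11 ρ22 : ℝ) (ρ12 : ℂ)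
    (h11 : (ρ11 : ℂ) = star ν₁ ⬝ᵥ (rho0 q₁ q₂ ρ₁ ρ₂ *ᵥ ν₁))
    (h22 : (ρ22 : ℂ) = star ν₂ ⬝ᵥ (rho0 q₁ q₂ ρ₁ ρ₂ *ᵥ ν₂))
    (h12 : ρ12 = star ν₁ ⬝ᵥ (rho0 q₁ q₂ ρ₁ ρ₂ *ᵥ ν₂))
    (hC₁ : 1 / 2 < C₁) (h12z : ρ12 = 0) :
    PbarOpt C₁ q₁ q₂ ρ₁ ρ₂ = ρ11 * C₁ + ρ22 * C₂ ∧
      (C₁ < C₂ → PIset C₁ q₁ q₂ ρ₁ ρ₂ = Set.Icc 0 ρ11) ∧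
      (C₁ = C₂ → PIset C₁ q₁ q₂ ρ₁ ρ₂ = Set.Icc 0 1) ∧
      q0low q₁ q₂ ρ₁ ρ₂ = C₁ :=
  stmt10_general q₁ q₂ ρ₁ ρ₂ hq htr₁ htr₂ hρ0 S hS hSS ν₁ ν₂ hν₁ hν₂ hν₁₂ C₁ C₂ hC12 hbar₁ hbar₂ ρ11
    ρ22 ρ12 h11 h22 h12 hC₁ h12z

end FRIR
end
end
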